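/- arXiv:2204.06678 — 15 statements merged into one kernel-verified Lean document; each statement's English description precedes it below -/
import Mathlib

section
/- Let φ, ψ : ℝ → ℝ be smooth with φ(u) > 0 and φ'(u)² + ψ'(u)² = 1 for all u; let u, v : ℝ → ℝ be smooth with u'(s)² + φ(u(s))²·v'(s)² = 1 for all s, and set Φ(s) = (φ(u(s))·cos(v(s)), φ(u(s))·sin(v(s)), ψ(u(s))). Let κ(s) = (u'(s)v''(s) − u''(s)v'(s))·φ(u(s)) + v'(s)(1 + u'(s)²)·φ'(u(s)) and η(s) = −v'(s)·φ(u(s))·e₁(s) + u'(s)·e₂(s) with e₁, e₂ as in the setup. Let ξ : ℝ → ℝ be differentiable with ξ(0) = 0, and let R(θ) denote the rotation of ℝ³ by angle θ about the z-axis. If the family Φ̂ᵗ(s) = R(ξ(t))·Φ(s) satisfies the curve shortening flow equation at t = 0, i.e. ⟨(d/dt)|_{t=0} Φ̂ᵗ(s), η(s)⟩ = κ(s) for every s, then κ(s) = ξ'(0)·φ(u(s))·u'(s) for all s. -/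
open Real

/-- If the family `Φ̂ᵗ(s) = R(ξ(t))·Φ(s)` of rotated curves satisfies
the curve shortening flow equation at `t = 0`, then the geodesic curvature
satisfies `κ(s) = ξ'(0)·φ(u(s))·u'(s)`. -/
theorem soliton_necessary_condition
    (φ ψ u v : ℝ → ℝ)
    (hφ : ContDiff ℝ (⊤ : ℕ∞) φ) (hψ : ContDiff ℝ (⊤ : ℕ∞) ψ)
    (hφpos : ∀ x, 0 < φ x)
    (hgen : ∀ x, deriv φ x ^ 2 + deriv ψ x ^ 2 = 1)
    (hu : ContDiff ℝ (⊤ : ℕ∞) u) (hv : ContDiff ℝ (⊤ : ℕ∞) v)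
    (harc : ∀ s, deriv u s ^ 2 + φ (u s) ^ 2 * deriv v s ^ 2 = 1)
    (Φ e₁ e₂ η : ℝ → Fin 3 → ℝ)
    (hΦ : Φ = fun s => ![φ (u s) * cos (v s), φ (u s) * sin (v s), ψ (u s)])
    (he₁ : e₁ = fun s =>
      ![deriv φ (u s) * cos (v s), deriv φ (u s) * sin (v s), deriv ψ (u s)])
    (he₂ : e₂ = fun s => ![-sin (v s), cos (v s), 0])
    (hη : η = fun s => (-(deriv v s * φ (u s))) • e₁ s + deriv u s • e₂ s)
    (κ : ℝ → ℝ)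
    (hκ : κ = fun s =>
      (deriv u s * deriv (deriv v) s - deriv (deriv u) s * deriv v s) * φ (u s)
        + deriv v s * (1 + deriv u s ^ 2) * deriv φ (u s))
    -- rotation about the z-axis by angle θ
    (R : ℝ → (Fin 3 → ℝ) → (Fin 3 → ℝ))
    (hR : R = fun θ p => ![cos θ * p 0 - sin θ * p 1,
                           sin θ * p 0 + cos θ * p 1, p 2])
    (ξ : ℝ → ℝ) (hξ : Differentiable ℝ ξ) (hξ0 : ξ 0 = 0)
    -- the CSF equation at t = 0 : ⟨∂ₜ|₀ R(ξ(t))Φ(s), η(s)⟩ = κ(s)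
    (hcsf : ∀ s : ℝ,
      deriv (fun t => R (ξ t) (Φ s)) 0 0 * η s 0
        + deriv (fun t => R (ξ t) (Φ s)) 0 1 * η s 1
        + deriv (fun t => R (ξ t) (Φ s)) 0 2 * η s 2 = κ s) :
    ∀ s : ℝ, κ s = deriv ξ 0 * φ (u s) * deriv u s := by
  intro s
  have hξd : HasDerivAt ξ (deriv ξ 0) 0 := (hξ 0).hasDerivAt
  have hcos : HasDerivAt (fun t => Real.cos (ξ t)) 0 0 := by
    simpa [hξ0, Function.comp_def] using (Real.hasDerivAt_cos (ξ 0)).comp 0 hξd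
  have hsin : HasDerivAt (fun t => Real.sin (ξ t)) (deriv ξ 0) 0 := by
    simpa [hξ0, Function.comp_def] using (Real.hasDerivAt_sin (ξ 0)).comp 0 hξd
  have hvec : HasDerivAt (fun t => R (ξ t) (Φ s))
      (![-(deriv ξ 0 * Φ s 1), deriv ξ 0 * Φ s 0, 0]) 0 := by
    rw [hasDerivAt_pi]
    intro i
    fin_cases i
    · simpa [hR, Pi.sub_def] using ((hcos.mul_const (Φ s 0)).sub (hsin.mul_const (Φ s 1)))
    · simpa [hR, Pi.add_def] using ((hsin.mul_const (Φ s 0)).add (hcos.mul_const (Φ s 1)))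
    · simpa [hR] using (hasDerivAt_const (0:ℝ) (Φ s 2))
  have hd := hvec.deriv
  have hc := hcsf s
  rw [hd] at hc
  simp only [hΦ, he₁, he₂, hη, Matrix.cons_val_zero, Matrix.cons_val_one,
    Matrix.head_cons, Matrix.cons_val_two, Matrix.tail_cons, Pi.add_apply,
    Pi.smul_apply, smul_eq_mul] at hc
  rw [← hc]
  linear_combination (deriv ξ 0 * φ (u s) * deriv u s) * (sin_sq_add_cos_sq (v s))
end

section
/- Let φ, ψ : ℝ → ℝ be smooth with φ(u) > 0 and φ'(u)² + ψ'(u)² = 1 for all u; let u, v : ℝ → ℝ be smooth with u'(s)² + φ(u(s))²·v'(s)² = 1 for all s, and set Φ(s) = (φ(u(s))·cos(v(s)), φ(u(s))·sin(v(s)), ψ(u(s))). Let κ(s) = (u'(s)v''(s) − u''(s)v'(s))·φ(u(s)) + v'(s)(1 + u'(s)²)·φ'(u(s)) and η(s) = −v'(s)·φ(u(s))·e₁(s) + u'(s)·e₂(s) with e₁, e₂ as in the setup. Suppose there is a ∈ ℝ with κ(s) = a·φ(u(s))·u'(s) for all s. Let R(θ) denote the rotation of ℝ³ by angle θ about the z-axis.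 Then the family Φ̂ᵗ(s) = R(a·t)·Φ(s) satisfies the curve shortening flow equation for all t: ⟨∂ₜΦ̂ᵗ(s), R(a·t)·η(s)⟩ = κ(s) for every s and t. -/
open Real

/-- If the geodesic curvature satisfies `κ(s) = a·φ(u(s))·u'(s)`,
then the rotated family `Φ̂ᵗ(s) = R(a·t)·Φ(s)` satisfies the curve shortening
flow equation for all `t`: `⟨∂ₜΦ̂ᵗ(s), R(a·t)·η(s)⟩ = κ(s)`. -/
theorem soliton_sufficient_condition
    (φ ψ u v : ℝ → ℝ)
    (hφ : ContDiff ℝ (⊤ : ℕ∞) φ) (hψ : ContDiff ℝ (⊤ : ℕ∞) ψ)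
    (hφpos : ∀ x, 0 < φ x)
    (hgen : ∀ x, deriv φ x ^ 2 + deriv ψ x ^ 2 = 1)
    (hu : ContDiff ℝ (⊤ : ℕ∞) u) (hv : ContDiff ℝ (⊤ : ℕ∞) v)
    (harc : ∀ s, deriv u s ^ 2 + φ (u s) ^ 2 * deriv v s ^ 2 = 1)
    (Φ e₁ e₂ η : ℝ → Fin 3 → ℝ)
    (hΦ : Φ = fun s => ![φ (u s) * cos (v s), φ (u s) * sin (v s), ψ (u s)])
    (he₁ : e₁ = fun s =>
      ![deriv φ (u s) * cos (v s), deriv φ (u s) * sin (v s), deriv ψ (u s)])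
    (he₂ : e₂ = fun s => ![-sin (v s), cos (v s), 0])
    (hη : η = fun s => (-(deriv v s * φ (u s))) • e₁ s + deriv u s • e₂ s)
    (κ : ℝ → ℝ)
    (hκ : κ = fun s =>
      (deriv u s * deriv (deriv v) s - deriv (deriv u) s * deriv v s) * φ (u s)
        + deriv v s * (1 + deriv u s ^ 2) * deriv φ (u s))
    (a : ℝ)
    (hsol : ∀ s, κ s = a * φ (u s) * deriv u s)
    -- rotation about the z-axis by angle θ
    (R : ℝ → (Fin 3 → ℝ) → (Fin 3 → ℝ))
    (hR : R = fun θ p => ![cos θ * p 0 - sin θ * p 1,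
                           sin θ * p 0 + cos θ * p 1, p 2]) :
    ∀ s t : ℝ,
      deriv (fun τ => R (a * τ) (Φ s)) t 0 * R (a * t) (η s) 0
        + deriv (fun τ => R (a * τ) (Φ s)) t 1 * R (a * t) (η s) 1
        + deriv (fun τ => R (a * τ) (Φ s)) t 2 * R (a * t) (η s) 2 = κ s := by
  intro s t
  have ha : HasDerivAt (fun τ : ℝ => a * τ) a t := by
    simpa using (hasDerivAt_id t).const_mul a
  have hcos : HasDerivAt (fun τ : ℝ => cos (a * τ)) (-sin (a * t) * a) t :=
    (Real.hasDerivAt_cos (a * t)).comp t ha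
  have hsin : HasDerivAt (fun τ : ℝ => sin (a * τ)) (cos (a * t) * a) t :=
    (Real.hasDerivAt_sin (a * t)).comp t ha
  have hD : HasDerivAt (fun τ => R (a * τ) (Φ s))
      (![(-sin (a * t) * a) * Φ s 0 - (cos (a * t) * a) * Φ s 1,
         (cos (a * t) * a) * Φ s 0 + (-sin (a * t) * a) * Φ s 1, 0]) t := by
    rw [hR]
    rw [hasDerivAt_pi]
    intro i
    fin_cases i
    · simpa using (hcos.mul_const (Φ s 0)).fun_sub (hsin.mul_const (Φ s 1))
    · simpa using (hsin.mul_const (Φ s 0)).fun_add (hcos.mul_const (Φ s 1))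
    · simpa using hasDerivAt_const t (Φ s 2)
  rw [hD.deriv, hsol s, hR, hη, he₁, he₂, hΦ]
  simp only [Matrix.cons_val_zero, Matrix.cons_val_one, Matrix.head_cons,
    Pi.add_apply, Pi.smul_apply, smul_eq_mul, Matrix.cons_val_two, Matrix.tail_cons]
  have h1 := sin_sq_add_cos_sq (a * t)
  have h2 := sin_sq_add_cos_sq (v s)
  linear_combination (a * φ (u s) * deriv u s * (sin (v s) ^ 2 + cos (v s) ^ 2)) * h1
    + (a * φ (u s) * deriv u s) * h2
end

section
/- Let φ, ψ : ℝ → ℝ be smooth with φ(u) > 0 and φ'(u)² + ψ'(u)² = 1 for all u; let u, v : ℝ → ℝ be smooth with u'(s)² + φ(u(s))²·v'(s)² = 1 for all s, and let κ(s) = (u'(s)v''(s) − u''(s)v'(s))·φ(u(s)) + v'(s)(1 + u'(s)²)·φ'(u(s)). If there is a ∈ ℝ such that κ(s) = a·φ(u(s))·u'(s) for all s, then for all s: u''(s) = −a·u'(s)·v'(s)·φ(u(s))² + v'(s)²·φ(u(s))·φ'(u(s)) and v''(s) = a·u'(s)² − 2·u'(s)·v'(s)·φ'(u(s))/φ(u(s)).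 -/
open Real

/-- A rotational soliton (κ = a·φ(u)·u') satisfies the ODE system
`u'' = −a·u'·v'·φ(u)² + v'²·φ(u)·φ'(u)` and
`v'' = a·u'² − 2·u'·v'·φ'(u)/φ(u)`. -/
theorem soliton_ode_system
    (φ ψ u v : ℝ → ℝ)
    (hφ : ContDiff ℝ (⊤ : ℕ∞) φ) (hψ : ContDiff ℝ (⊤ : ℕ∞) ψ)
    (hφpos : ∀ x, 0 < φ x)
    (hgen : ∀ x, deriv φ x ^ 2 + deriv ψ x ^ 2 = 1)
    (hu : ContDiff ℝ (⊤ : ℕ∞) u) (hv : ContDiff ℝ (⊤ : ℕ∞) v)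
    (harc : ∀ s, deriv u s ^ 2 + φ (u s) ^ 2 * deriv v s ^ 2 = 1)
    (κ : ℝ → ℝ)
    (hκ : κ = fun s =>
      (deriv u s * deriv (deriv v) s - deriv (deriv u) s * deriv v s) * φ (u s)
        + deriv v s * (1 + deriv u s ^ 2) * deriv φ (u s))
    (a : ℝ)
    (hsol : ∀ s, κ s = a * φ (u s) * deriv u s) :
    ∀ s : ℝ,
      deriv (deriv u) s
        = -a * deriv u s * deriv v s * φ (u s) ^ 2
          + deriv v s ^ 2 * φ (u s) * deriv φ (u s)
      ∧ deriv (deriv v) s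
        = a * deriv u s ^ 2 - 2 * deriv u s * deriv v s * deriv φ (u s) / φ (u s) := by
  intro s
  have hu' : ContDiff ℝ (⊤ : ℕ∞) (deriv u) :=
    (contDiff_infty_iff_deriv.mp (hu.of_le (by simp))).2
  have hv' : ContDiff ℝ (⊤ : ℕ∞) (deriv v) :=
    (contDiff_infty_iff_deriv.mp (hv.of_le (by simp))).2
  have hA : HasDerivAt (deriv u) (deriv (deriv u) s) s :=
    (hu'.differentiable (by simp) s).hasDerivAt
  have hB : HasDerivAt (deriv v) (deriv (deriv v) s) s :=
    (hv'.differentiable (by simp) s).hasDerivAt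
  have hU : HasDerivAt u (deriv u s) s := (hu.differentiable (by simp) s).hasDerivAt
  have hP : HasDerivAt (fun t => φ (u t)) (deriv φ (u s) * deriv u s) s :=
    ((hφ.differentiable (by simp) (u s)).hasDerivAt).comp s hU
  have harc' : HasDerivAt (fun t => deriv u t ^ 2 + φ (u t) ^ 2 * deriv v t ^ 2)
      ((2 : ℕ) * deriv u s ^ 1 * deriv (deriv u) s +
        (((2 : ℕ) * φ (u s) ^ 1 * (deriv φ (u s) * deriv u s)) * deriv v s ^ 2 +
          φ (u s) ^ 2 * ((2 : ℕ) * deriv v s ^ 1 * deriv (deriv v) s))) s :=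
    (hA.pow 2).add ((hP.pow 2).mul (hB.pow 2))
  have hconst : (fun t => deriv u t ^ 2 + φ (u t) ^ 2 * deriv v t ^ 2)
      = fun _ => (1 : ℝ) := funext harc
  rw [hconst] at harc'
  have hzero : ((2 : ℕ) * deriv u s ^ 1 * deriv (deriv u) s +
        (((2 : ℕ) * φ (u s) ^ 1 * (deriv φ (u s) * deriv u s)) * deriv v s ^ 2 +
          φ (u s) ^ 2 * ((2 : ℕ) * deriv v s ^ 1 * deriv (deriv v) s))) = 0 :=
    harc'.unique (hasDerivAt_const s 1)
  push_cast at hzero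
  have hs := hsol s
  rw [hκ] at hs
  simp only [] at hs
  have hP0 : φ (u s) ≠ 0 := (hφpos (u s)).ne'
  constructor
  · linear_combination (deriv u s / 2) * hzero - φ (u s) * deriv v s * hs
      - deriv (deriv u) s * (harc s)
  · have hVeq : φ (u s) * deriv (deriv v) s
        = a * φ (u s) * deriv u s ^ 2
          - 2 * deriv u s * deriv v s * deriv φ (u s) := by
      linear_combination (φ (u s) * deriv v s / 2) * hzero + deriv u s * hs
        - (φ (u s) * deriv (deriv v) s
            + deriv u s * deriv v s * deriv φ (u s)) * (harc s)
    field_simp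
    linear_combination hVeq
end

section
/- Let φ, ψ : ℝ → ℝ be smooth with φ(u) > 0 and φ'(u)² + ψ'(u)² = 1 for all u; let u, v : ℝ → ℝ be smooth with u'(s)² + φ(u(s))²·v'(s)² = 1 for all s, and let a ∈ ℝ. If for all s: u''(s) = −a·u'(s)·v'(s)·φ(u(s))² + v'(s)²·φ(u(s))·φ'(u(s)) and v''(s) = a·u'(s)² − 2·u'(s)·v'(s)·φ'(u(s))/φ(u(s)), then the geodesic curvature κ(s) = (u'(s)v''(s) − u''(s)v'(s))·φ(u(s)) + v'(s)(1 + u'(s)²)·φ'(u(s)) satisfies κ(s) = a·φ(u(s))·u'(s) for all s. -/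
open Real

/-- Conversely, if `u'' = −a·u'·v'·φ(u)² + v'²·φ(u)·φ'(u)` and
`v'' = a·u'² − 2·u'·v'·φ'(u)/φ(u)`, then the geodesic curvature satisfies
`κ = a·φ(u)·u'`. -/
theorem ode_system_implies_soliton
    (φ ψ u v : ℝ → ℝ)
    (hφ : ContDiff ℝ (⊤ : ℕ∞) φ) (hψ : ContDiff ℝ (⊤ : ℕ∞) ψ)
    (hφpos : ∀ x, 0 < φ x)
    (hgen : ∀ x, deriv φ x ^ 2 + deriv ψ x ^ 2 = 1)
    (hu : ContDiff ℝ (⊤ : ℕ∞) u) (hv : ContDiff ℝ (⊤ : ℕ∞) v)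
    (harc : ∀ s, deriv u s ^ 2 + φ (u s) ^ 2 * deriv v s ^ 2 = 1)
    (a : ℝ)
    (hode₁ : ∀ s, deriv (deriv u) s
      = -a * deriv u s * deriv v s * φ (u s) ^ 2
        + deriv v s ^ 2 * φ (u s) * deriv φ (u s))
    (hode₂ : ∀ s, deriv (deriv v) s
      = a * deriv u s ^ 2 - 2 * deriv u s * deriv v s * deriv φ (u s) / φ (u s))
    (κ : ℝ → ℝ)
    (hκ : κ = fun s =>
      (deriv u s * deriv (deriv v) s - deriv (deriv u) s * deriv v s) * φ (u s)
        + deriv v s * (1 + deriv u s ^ 2) * deriv φ (u s)) :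
    ∀ s : ℝ, κ s = a * φ (u s) * deriv u s := by
  intro s
  have h := harc s
  have hφ0 : φ (u s) ≠ 0 := (hφpos (u s)).ne'
  subst hκ
  simp only [hode₁ s, hode₂ s]
  field_simp
  linear_combination (a * φ (u s) * deriv u s - deriv v s * deriv φ (u s)) * h
end

section
/- Let φ, ψ : ℝ → ℝ be smooth with φ(u) > 0 and φ'(u)² + ψ'(u)² = 1 for all u; let u, v : ℝ → ℝ be smooth with u'(s)² + φ(u(s))²·v'(s)² = 1 and u'(s)² < 1 for all s. Suppose there is a ∈ ℝ such that κ(s) = (u'(s)v''(s) − u''(s)v'(s))·φ(u(s)) + v'(s)(1 + u'(s)²)·φ'(u(s)) equals a·φ(u(s))·u'(s) for all s. Then for all s, the derivative of the function s ↦ v'(s)/(1 − u'(s)²) equals −a·u'(s)²/(1 − u'(s)²). -/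
open Real

/-- For a rotational soliton with `u'² < 1`, the derivative of
`s ↦ v'/(1 − u'²)` equals `−a·u'²/(1 − u'²)`. -/
theorem derivative_identity
    (φ ψ u v : ℝ → ℝ)
    (hφ : ContDiff ℝ (⊤ : ℕ∞) φ) (hψ : ContDiff ℝ (⊤ : ℕ∞) ψ)
    (hφpos : ∀ x, 0 < φ x)
    (hgen : ∀ x, deriv φ x ^ 2 + deriv ψ x ^ 2 = 1)
    (hu : ContDiff ℝ (⊤ : ℕ∞) u) (hv : ContDiff ℝ (⊤ : ℕ∞) v)
    (harc : ∀ s, deriv u s ^ 2 + φ (u s) ^ 2 * deriv v s ^ 2 = 1)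
    (hu' : ∀ s, deriv u s ^ 2 < 1)
    (κ : ℝ → ℝ)
    (hκ : κ = fun s =>
      (deriv u s * deriv (deriv v) s - deriv (deriv u) s * deriv v s) * φ (u s)
        + deriv v s * (1 + deriv u s ^ 2) * deriv φ (u s))
    (a : ℝ)
    (hsol : ∀ s, κ s = a * φ (u s) * deriv u s) :
    ∀ s : ℝ,
      deriv (fun t => deriv v t / (1 - deriv u t ^ 2)) s
        = -a * deriv u s ^ 2 / (1 - deriv u s ^ 2) := by
  intro s
  have hu1 : ContDiff ℝ ((⊤:ℕ∞):WithTop ℕ∞) (deriv u) := (contDiff_infty_iff_deriv.mp (hu.of_le (by simp))).2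
  have hv1 : ContDiff ℝ ((⊤:ℕ∞):WithTop ℕ∞) (deriv v) := (contDiff_infty_iff_deriv.mp (hv.of_le (by simp))).2
  set p := deriv u s with hp_def
  set q := deriv v s with hq_def
  set p' := deriv (deriv u) s with hp'_def
  set q' := deriv (deriv v) s with hq'_def
  have hp : HasDerivAt (deriv u) p' s :=
    ((hu1.differentiable (by norm_num)) s).hasDerivAt
  have hq : HasDerivAt (deriv v) q' s :=
    ((hv1.differentiable (by norm_num)) s).hasDerivAt
  have hus : HasDerivAt u p s := ((hu.differentiable (by norm_num)) s).hasDerivAt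
  have hφu : HasDerivAt (fun t => φ (u t)) (deriv φ (u s) * p) s :=
    (((hφ.differentiable (by norm_num)) (u s)).hasDerivAt).comp s hus
  have hD : (1 : ℝ) - p ^ 2 ≠ 0 := by have := hu' s; rw [← hp_def] at this; linarith
  -- derivative of the arc-length relation
  have hG : HasDerivAt (fun t => deriv u t ^ 2 + φ (u t) ^ 2 * deriv v t ^ 2)
      ((2 * p ^ 1 * p') + ((2 * φ (u s) ^ 1 * (deriv φ (u s) * p)) * q ^ 2
        + φ (u s) ^ 2 * (2 * q ^ 1 * q'))) s := by
    exact (hp.pow 2).add ((hφu.pow 2).mul (hq.pow 2))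
  have harc' : (2 * p ^ 1 * p') + ((2 * φ (u s) ^ 1 * (deriv φ (u s) * p)) * q ^ 2
        + φ (u s) ^ 2 * (2 * q ^ 1 * q')) = 0 := by
    have hconst : HasDerivAt (fun t : ℝ => deriv u t ^ 2 + φ (u t) ^ 2 * deriv v t ^ 2)
        0 s := by
      have : (fun t : ℝ => deriv u t ^ 2 + φ (u t) ^ 2 * deriv v t ^ 2) = fun _ => (1:ℝ) := by
        funext t; exact harc t
      rw [this]; exact hasDerivAt_const s 1
    exact hG.unique hconst
  -- derivative of the target function
  have hgoal : HasDerivAt (fun t => deriv v t / (1 - deriv u t ^ 2))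
      ((q' * (1 - p ^ 2) - q * (0 - 2 * p ^ 1 * p')) / (1 - p ^ 2) ^ 2) s := by
    exact hq.div ((hasDerivAt_const s 1).sub (hp.pow 2)) hD
  rw [hgoal.deriv]
  have hs := hsol s
  rw [hκ] at hs
  simp only [← hp_def, ← hq_def, ← hp'_def, ← hq'_def] at hs
  have he1 := harc s
  rw [← hp_def, ← hq_def] at he1
  have hφne : φ (u s) ≠ 0 := (hφpos (u s)).ne'
  have key : q' * (1 - p ^ 2) + 2 * p * p' * q = -a * p ^ 2 * (1 - p ^ 2) := by
    linear_combination ((q + p ^ 2 * q) / 2) * harc' - (p * q ^ 2 * φ (u s)) * hs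
      - (q' + a * p ^ 2 + p * p' * q) * he1
  field_simp
  linear_combination key
end

section
/- Let φ, ψ : ℝ → ℝ be smooth with φ(u) > 0 and φ'(u)² + ψ'(u)² = 1 for all u; let u, v : ℝ → ℝ be smooth with u'(s)² + φ(u(s))²·v'(s)² = 1 for all s, and assume u'(s) ≠ 0 and u'(s)² < 1 for all s. Let a ∈ ℝ, a ≠ 0, and suppose the geodesic curvature κ(s) = (u'(s)v''(s) − u''(s)v'(s))·φ(u(s)) + v'(s)(1 + u'(s)²)·φ'(u(s)) satisfies κ(s) = a·φ(u(s))·u'(s) for all s. Let ε ∈ {−1, 1} and assume ε·v'(s) > 0 for all s. Setting Λ(s) = u'(s)/√(1 − u'(s)²), the function s ↦ Λ(s)/κ(s) is differentiable and ε·(d/ds)(Λ(s)/κ(s)) = −Λ(s)² for all s. -/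
open Real

/-- For a rotational soliton with `a ≠ 0`, `u' ≠ 0`, `u'² < 1`
and `ε·v' > 0` (ε = ±1), the function `Λ/κ` with `Λ = u'/√(1 − u'²)` is
differentiable and satisfies `ε·(Λ/κ)' = −Λ²`. -/
theorem lambda_over_kappa_ode
    (φ ψ u v : ℝ → ℝ)
    (hφ : ContDiff ℝ (⊤ : ℕ∞) φ) (hψ : ContDiff ℝ (⊤ : ℕ∞) ψ)
    (hφpos : ∀ x, 0 < φ x)
    (hgen : ∀ x, deriv φ x ^ 2 + deriv ψ x ^ 2 = 1)
    (hu : ContDiff ℝ (⊤ : ℕ∞) u) (hv : ContDiff ℝ (⊤ : ℕ∞) v)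
    (harc : ∀ s, deriv u s ^ 2 + φ (u s) ^ 2 * deriv v s ^ 2 = 1)
    (hu'ne : ∀ s, deriv u s ≠ 0)
    (hu' : ∀ s, deriv u s ^ 2 < 1)
    (a : ℝ) (ha : a ≠ 0)
    (κ : ℝ → ℝ)
    (hκ : κ = fun s =>
      (deriv u s * deriv (deriv v) s - deriv (deriv u) s * deriv v s) * φ (u s)
        + deriv v s * (1 + deriv u s ^ 2) * deriv φ (u s))
    (hsol : ∀ s, κ s = a * φ (u s) * deriv u s)
    (ε : ℝ) (hε : ε = 1 ∨ ε = -1)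
    (hv' : ∀ s, ε * deriv v s > 0)
    (Λ : ℝ → ℝ)
    (hΛ : Λ = fun s => deriv u s / Real.sqrt (1 - deriv u s ^ 2)) :
    Differentiable ℝ (fun s => Λ s / κ s)
      ∧ ∀ s : ℝ, ε * deriv (fun t => Λ t / κ t) s = -(Λ s ^ 2) := by
  have hεsq : ε ^ 2 = 1 := by rcases hε with h | h <;> simp [h]
  have hεne : ε ≠ 0 := by rcases hε with h | h <;> norm_num [h]
  have hud : Differentiable ℝ u := hu.differentiable (by simp)
  have hvd : Differentiable ℝ v := hv.differentiable (by simp)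
  have hu'd : Differentiable ℝ (deriv u) :=
    ((contDiff_infty_iff_deriv.mp (hu.of_le (by simp))).2).differentiable (by simp)
  have hv'd : Differentiable ℝ (deriv v) :=
    ((contDiff_infty_iff_deriv.mp (hv.of_le (by simp))).2).differentiable (by simp)
  have hφd : Differentiable ℝ φ := hφ.differentiable (by simp)
  have hv'ne : ∀ s, deriv v s ≠ 0 := by
    intro s h
    have := hv' s
    rw [h] at this
    simp at this
  have hφune : ∀ s, φ (u s) ≠ 0 := fun s => (hφpos (u s)).ne'
  have h1pos : ∀ s, 0 < 1 - deriv u s ^ 2 := fun s => by nlinarith [hu' s]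
  have hsq : ∀ s, φ (u s) ^ 2 * deriv v s ^ 2 = 1 - deriv u s ^ 2 := fun s => by
    nlinarith [harc s]
  have hεφv : ∀ s, 0 < ε * (φ (u s) * deriv v s) := fun s => by
    have h1 := mul_pos (hv' s) (hφpos (u s)); nlinarith [h1]
  have hsqrt : ∀ s, Real.sqrt (1 - deriv u s ^ 2) = ε * (φ (u s) * deriv v s) := by
    intro s
    rw [show 1 - deriv u s ^ 2 = (ε * (φ (u s) * deriv v s)) ^ 2 by
      linear_combination (-1 : ℝ) * hsq s - (φ (u s) * deriv v s) ^ 2 * hεsq]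
    exact Real.sqrt_sq (hεφv s).le
  have Hu : ∀ s, HasDerivAt u (deriv u s) s := fun s => (hud s).hasDerivAt
  have Hv' : ∀ s, HasDerivAt (deriv v) (deriv (deriv v) s) s := fun s => (hv'd s).hasDerivAt
  have Hu' : ∀ s, HasDerivAt (deriv u) (deriv (deriv u) s) s := fun s => (hu'd s).hasDerivAt
  have Hφu : ∀ s, HasDerivAt (fun t => φ (u t)) (deriv φ (u s) * deriv u s) s := fun s =>
    (hφd (u s)).hasDerivAt.comp s (Hu s)
  have Hφu2 : ∀ s, HasDerivAt (fun t => φ (u t) ^ 2)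
      (2 * φ (u s) * (deriv φ (u s) * deriv u s)) s := by
    intro s
    have := (Hφu s).fun_pow 2
    exact this.congr_deriv (by ring)
  -- key identity
  have key : ∀ s, φ (u s) ^ 2 * deriv (deriv v) s
      + 2 * φ (u s) * deriv φ (u s) * deriv u s * deriv v s
      = a * φ (u s) ^ 2 * deriv u s ^ 2 := by
    intro s
    have e1 : HasDerivAt (fun t => deriv u t ^ 2) (2 * deriv u s * deriv (deriv u) s) s := by
      have := (Hu' s).fun_pow 2
      exact this.congr_deriv (by ring)
    have e3 : HasDerivAt (fun t => deriv v t ^ 2) (2 * deriv v s * deriv (deriv v) s) s := by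
      have := (Hv' s).fun_pow 2
      exact this.congr_deriv (by ring)
    have hD : HasDerivAt (fun t => deriv u t ^ 2 + φ (u t) ^ 2 * deriv v t ^ 2)
        (2 * deriv u s * deriv (deriv u) s
          + ((2 * φ (u s) * (deriv φ (u s) * deriv u s)) * deriv v s ^ 2
            + φ (u s) ^ 2 * (2 * deriv v s * deriv (deriv v) s))) s :=
      e1.add ((Hφu2 s).mul e3)
    have hconst : (fun t => deriv u t ^ 2 + φ (u t) ^ 2 * deriv v t ^ 2) = fun _ => (1 : ℝ) :=
      funext harc
    rw [hconst] at hD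
    have hzero := hD.unique (hasDerivAt_const s 1)
    have hE2 : (deriv u s * deriv (deriv v) s - deriv (deriv u) s * deriv v s) * φ (u s)
        + deriv v s * (1 + deriv u s ^ 2) * deriv φ (u s) = a * φ (u s) * deriv u s := by
      rw [hκ] at hsol; exact hsol s
    linear_combination (deriv u s * φ (u s)) * hE2 + (φ (u s) ^ 2 * deriv v s / 2) * hzero
      - (φ (u s) ^ 2 * deriv (deriv v) s
          + φ (u s) * deriv φ (u s) * deriv u s * deriv v s) * harc s
  -- Λ/κ equals a nice function
  have hΛκ : (fun s => Λ s / κ s) = fun s => ε / (a * (φ (u s) ^ 2 * deriv v s)) := by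
    funext s
    rw [hΛ, hκ]
    simp only
    rw [hsqrt s]
    have hE2 : (deriv u s * deriv (deriv v) s - deriv (deriv u) s * deriv v s) * φ (u s)
        + deriv v s * (1 + deriv u s ^ 2) * deriv φ (u s) = a * φ (u s) * deriv u s := by
      rw [hκ] at hsol; exact hsol s
    rw [hE2]
    field_simp [hεne, hu'ne s, hv'ne s, hφune s, ha]
    linear_combination (-1 : ℝ) * hεsq
  have hgd : Differentiable ℝ (fun s => ε / (a * (φ (u s) ^ 2 * deriv v s))) := by
    apply Differentiable.div (differentiable_const ε)
    · exact (differentiable_const a).mul (((hφd.comp hud).pow 2).mul hv'd)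
    · intro x
      exact mul_ne_zero ha (mul_ne_zero (pow_ne_zero 2 (hφune x)) (hv'ne x))
  rw [hΛκ]
  refine ⟨hgd, fun s => ?_⟩
  have hdenne : a * (φ (u s) ^ 2 * deriv v s) ≠ 0 :=
    mul_ne_zero ha (mul_ne_zero (pow_ne_zero 2 (hφune s)) (hv'ne s))
  have hden : HasDerivAt (fun t => a * (φ (u t) ^ 2 * deriv v t))
      (a * ((2 * φ (u s) * (deriv φ (u s) * deriv u s)) * deriv v s
        + φ (u s) ^ 2 * deriv (deriv v) s)) s :=
    ((Hφu2 s).mul (Hv' s)).const_mul a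
  have hgs : HasDerivAt (fun t => ε / (a * (φ (u t) ^ 2 * deriv v t)))
      ((0 * (a * (φ (u s) ^ 2 * deriv v s))
        - ε * (a * ((2 * φ (u s) * (deriv φ (u s) * deriv u s)) * deriv v s
            + φ (u s) ^ 2 * deriv (deriv v) s)))
        / (a * (φ (u s) ^ 2 * deriv v s)) ^ 2) s :=
    (hasDerivAt_const s ε).div hden hdenne
  rw [hgs.deriv]
  have hΛsq : Λ s ^ 2 = deriv u s ^ 2 / (1 - deriv u s ^ 2) := by
    rw [hΛ]
    simp only
    rw [div_pow, Real.sq_sqrt (h1pos s).le]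
  rw [hΛsq, ← hsq s]
  field_simp [hεne, hu'ne s, hv'ne s, hφune s, ha]
  linear_combination (-(ε ^ 2)) * (mul_left_cancel₀ (hφune s)
      (show φ (u s) * (φ (u s) * deriv (deriv v) s + 2 * deriv φ (u s) * deriv u s * deriv v s)
        = φ (u s) * (a * φ (u s) * deriv u s ^ 2) by linear_combination key s))
    - (a * φ (u s) * deriv u s ^ 2) * hεsq
end

section
/- Let φ, ψ : ℝ → ℝ be smooth with φ(u) > 0 and φ'(u)² + ψ'(u)² = 1 for all u; let u, v : ℝ → ℝ be smooth with u'(s)² + φ(u(s))²·v'(s)² = 1 for all s, and assume u'(s) ≠ 0 and u'(s)² < 1 for all s. Let a ∈ ℝ, a ≠ 0, and suppose the geodesic curvature κ(s) = (u'(s)v''(s) − u''(s)v'(s))·φ(u(s)) + v'(s)(1 + u'(s)²)·φ'(u(s)) satisfies κ(s) = a·φ(u(s))·u'(s) for all s. Let ε ∈ {−1, 1} with ε·v'(s) > 0 for all s, set Λ(s) = u'(s)/√(1 − u'(s)²), and fix s₀ ∈ ℝ. Then there exists c ∈ ℝ such that for all s: κ(s) = Λ(s)·(c + ε·∫_{s₀}^{s}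 κ(t)² dt). -/
open Real

/-- For a rotational soliton with `a ≠ 0`, `u' ≠ 0`, `u'² < 1` and
`ε·v' > 0` (ε = ±1), there exists `c ∈ ℝ` such that
`κ(s) = Λ(s)·(c + ε·∫_{s₀}^{s} κ²)` for all s, where `Λ = u'/√(1 − u'²)`. -/
theorem kappa_integral_formula
    (φ ψ u v : ℝ → ℝ)
    (hφ : ContDiff ℝ (⊤ : ℕ∞) φ) (hψ : ContDiff ℝ (⊤ : ℕ∞) ψ)
    (hφpos : ∀ x, 0 < φ x)
    (hgen : ∀ x, deriv φ x ^ 2 + deriv ψ x ^ 2 = 1)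
    (hu : ContDiff ℝ (⊤ : ℕ∞) u) (hv : ContDiff ℝ (⊤ : ℕ∞) v)
    (harc : ∀ s, deriv u s ^ 2 + φ (u s) ^ 2 * deriv v s ^ 2 = 1)
    (hu'ne : ∀ s, deriv u s ≠ 0)
    (hu' : ∀ s, deriv u s ^ 2 < 1)
    (a : ℝ) (ha : a ≠ 0)
    (κ : ℝ → ℝ)
    (hκ : κ = fun s =>
      (deriv u s * deriv (deriv v) s - deriv (deriv u) s * deriv v s) * φ (u s)
        + deriv v s * (1 + deriv u s ^ 2) * deriv φ (u s))
    (hsol : ∀ s, κ s = a * φ (u s) * deriv u s)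
    (ε : ℝ) (hε : ε = 1 ∨ ε = -1)
    (hv' : ∀ s, ε * deriv v s > 0)
    (Λ : ℝ → ℝ)
    (hΛ : Λ = fun s => deriv u s / Real.sqrt (1 - deriv u s ^ 2))
    (s₀ : ℝ) :
    ∃ c : ℝ, ∀ s : ℝ, κ s = Λ s * (c + ε * ∫ t in s₀..s, κ t ^ 2) := by
  have hε2 : ε ^ 2 = 1 := by rcases hε with h | h <;> simp [h]
  have hud : Differentiable ℝ u := hu.differentiable (by simp)
  have hvd : Differentiable ℝ v := hv.differentiable (by simp)
  have huT : ContDiff ℝ (⊤ : ℕ∞) u := hu.of_le (by simp)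
  have hvT : ContDiff ℝ (⊤ : ℕ∞) v := hv.of_le (by simp)
  have hu'cd := (contDiff_infty_iff_deriv.mp huT).2
  have hv'cd := (contDiff_infty_iff_deriv.mp hvT).2
  have hu'd : Differentiable ℝ (deriv u) := hu'cd.differentiable (by simp)
  have hv'd : Differentiable ℝ (deriv v) := hv'cd.differentiable (by simp)
  -- the key function G with G' = κ²
  set G : ℝ → ℝ := fun s => a * φ (u s) ^ 2 * deriv v s with hG
  have key : ∀ s, HasDerivAt G (κ s ^ 2) s := by
    intro s
    have hU : HasDerivAt u (deriv u s) s := (hud s).hasDerivAt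
    have hU1 : HasDerivAt (deriv u) (deriv (deriv u) s) s := (hu'd s).hasDerivAt
    have hV1 : HasDerivAt (deriv v) (deriv (deriv v) s) s := (hv'd s).hasDerivAt
    have hP : HasDerivAt (fun s => φ (u s)) (deriv φ (u s) * deriv u s) s :=
      (((hφ.differentiable (by simp)) (u s)).hasDerivAt).comp s hU
    -- derivative of the arc-length identity is zero
    have hArc : HasDerivAt (fun s => deriv u s ^ 2 + φ (u s) ^ 2 * deriv v s ^ 2)
        (2 * deriv u s * deriv (deriv u) s
          + ((2 * φ (u s) * (deriv φ (u s) * deriv u s)) * deriv v s ^ 2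
            + φ (u s) ^ 2 * (2 * deriv v s * deriv (deriv v) s))) s := by
      have h1 := (hU1.fun_pow 2).fun_add ((hP.fun_pow 2).fun_mul (hV1.fun_pow 2))
      refine h1.congr_deriv ?_
      ring
    have h2 : 2 * deriv u s * deriv (deriv u) s
        + ((2 * φ (u s) * (deriv φ (u s) * deriv u s)) * deriv v s ^ 2
          + φ (u s) ^ 2 * (2 * deriv v s * deriv (deriv v) s)) = 0 := by
      have hfun : (fun s => deriv u s ^ 2 + φ (u s) ^ 2 * deriv v s ^ 2)
          = fun _ : ℝ => (1 : ℝ) := funext harc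
      rw [hfun] at hArc
      exact hArc.unique (hasDerivAt_const s 1)
    have hGd : HasDerivAt G
        (a * (2 * φ (u s) * (deriv φ (u s) * deriv u s)) * deriv v s
          + a * φ (u s) ^ 2 * deriv (deriv v) s) s := by
      have := (((hP.fun_pow 2).const_mul a).fun_mul hV1)
      refine this.congr_deriv ?_
      ring
    convert hGd using 1
    -- κ·u' = φ·v'' + 2·φ'·u'·v'
    have hκs : κ s = (deriv u s * deriv (deriv v) s - deriv (deriv u) s * deriv v s) * φ (u s)
        + deriv v s * (1 + deriv u s ^ 2) * deriv φ (u s) := by rw [hκ]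
    have hkey : deriv u s * κ s = φ (u s) * deriv (deriv v) s
        + 2 * deriv φ (u s) * deriv u s * deriv v s := by
      linear_combination (deriv u s) * hκs - (φ (u s) * deriv v s / 2) * h2 +
        (φ (u s) * deriv (deriv v) s + deriv φ (u s) * deriv u s * deriv v s) * (harc s)
    have hs := hsol s
    have hune := hu'ne s
    -- κ² = a·φ·(u'·κ)
    have : κ s ^ 2 = a * φ (u s) * (deriv u s * κ s) := by
      rw [hs]; ring
    rw [this, hkey]
    ring
  -- continuity / integrability of κ²
  have hκc : Continuous κ := by
    have : κ = fun s => a * φ (u s) * deriv u s := funext hsol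
    rw [this]
    exact (continuous_const.mul ((hφ.continuous).comp hu.continuous)).mul hu'cd.continuous
  have hint : ∀ s, (∫ t in s₀..s, κ t ^ 2) = G s - G s₀ := by
    intro s
    exact intervalIntegral.integral_eq_sub_of_hasDerivAt (fun t _ => key t)
      ((hκc.pow 2).intervalIntegrable s₀ s)
  refine ⟨ε * G s₀, fun s => ?_⟩
  rw [hint s, hΛ]
  have hP : 0 < φ (u s) := hφpos (u s)
  have hεv : 0 < ε * deriv v s := hv' s
  have hpos : 0 < ε * φ (u s) * deriv v s := by
    have : ε * φ (u s) * deriv v s = φ (u s) * (ε * deriv v s) := by ring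
    rw [this]; exact mul_pos hP hεv
  have hsqrt : Real.sqrt (1 - deriv u s ^ 2) = ε * φ (u s) * deriv v s := by
    rw [show (1 : ℝ) - deriv u s ^ 2 = (ε * φ (u s) * deriv v s) ^ 2 by
      linear_combination (-(φ (u s) * deriv v s) ^ 2) * hε2 - harc s]
    exact Real.sqrt_sq hpos.le
  simp only
  rw [hsqrt, hsol s]
  have hne : ε * φ (u s) * deriv v s ≠ 0 := hpos.ne'
  simp only [hG]
  have hv'ne : deriv v s ≠ 0 := right_ne_zero_of_mul hεv.ne'
  rcases hε with h | h <;> subst h <;> field_simp [hP.ne', hv'ne] <;> ring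
end

section
/- Let φ, ψ : ℝ → ℝ be smooth with φ(u) > 0 and φ'(u)² + ψ'(u)² = 1 for all u; let u, v : ℝ → ℝ be smooth with u'(s)² + φ(u(s))²·v'(s)² = 1 for all s, and let a ∈ ℝ. Suppose the geodesic curvature κ(s) = (u'(s)v''(s) − u''(s)v'(s))·φ(u(s)) + v'(s)(1 + u'(s)²)·φ'(u(s)) satisfies κ(s) = a·φ(u(s))·u'(s) for all s. Then for all s: |u''(s)| ≤ |a|·φ(u(s)) + |φ'(u(s))|/φ(u(s)). -/
open Real

/-- For a rotational soliton, `|u''| ≤ |a|·φ(u) + |φ'(u)|/φ(u)`. -/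
theorem u_second_derivative_bound
    (φ ψ u v : ℝ → ℝ)
    (hφ : ContDiff ℝ (⊤ : ℕ∞) φ) (hψ : ContDiff ℝ (⊤ : ℕ∞) ψ)
    (hφpos : ∀ x, 0 < φ x)
    (hgen : ∀ x, deriv φ x ^ 2 + deriv ψ x ^ 2 = 1)
    (hu : ContDiff ℝ (⊤ : ℕ∞) u) (hv : ContDiff ℝ (⊤ : ℕ∞) v)
    (harc : ∀ s, deriv u s ^ 2 + φ (u s) ^ 2 * deriv v s ^ 2 = 1)
    (a : ℝ)
    (κ : ℝ → ℝ)
    (hκ : κ = fun s =>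
      (deriv u s * deriv (deriv v) s - deriv (deriv u) s * deriv v s) * φ (u s)
        + deriv v s * (1 + deriv u s ^ 2) * deriv φ (u s))
    (hsol : ∀ s, κ s = a * φ (u s) * deriv u s) :
    ∀ s : ℝ, |deriv (deriv u) s| ≤ |a| * φ (u s) + |deriv φ (u s)| / φ (u s) := by
  intro s
  have hu' : ContDiff ℝ (↑(⊤:ℕ∞)) (deriv u) := (contDiff_infty_iff_deriv.mp (hu.of_le (by simp))).2
  have hv' : ContDiff ℝ (↑(⊤:ℕ∞)) (deriv v) := (contDiff_infty_iff_deriv.mp (hv.of_le (by simp))).2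
  set p := deriv u s with hp
  set q := deriv v s with hq
  set F := φ (u s) with hF
  set F' := deriv φ (u s) with hF'
  set p' := deriv (deriv u) s with hp'
  set q' := deriv (deriv v) s with hq'
  have hFpos : 0 < F := hφpos (u s)
  -- derivatives as HasDerivAt
  have hus : HasDerivAt u p s := (hu.differentiable (by simp) s).hasDerivAt
  have hvs : HasDerivAt v q s := (hv.differentiable (by simp) s).hasDerivAt
  have hdus : HasDerivAt (deriv u) p' s := (hu'.differentiable (by simp) s).hasDerivAt
  have hdvs : HasDerivAt (deriv v) q' s := (hv'.differentiable (by simp) s).hasDerivAt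
  have hφus : HasDerivAt (fun t => φ (u t)) (F' * p) s :=
    ((hφ.differentiable (by simp) (u s)).hasDerivAt).comp s hus
  -- derivative of arc-length relation
  have hFfun : HasDerivAt
      (fun t => deriv u t ^ 2 + φ (u t) ^ 2 * deriv v t ^ 2)
      ((2 * p ^ 1 * p') + ((2 * F ^ 1 * (F' * p)) * q ^ 2 + F ^ 2 * (2 * q ^ 1 * q'))) s := by
    exact (hdus.pow 2).add ((hφus.pow 2).mul (hdvs.pow 2))
  have hconstfun : (fun t : ℝ => deriv u t ^ 2 + φ (u t) ^ 2 * deriv v t ^ 2)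
      = fun _ => (1 : ℝ) := funext harc
  rw [hconstfun] at hFfun
  have hB0 : (2 * p ^ 1 * p') + ((2 * F ^ 1 * (F' * p)) * q ^ 2 + F ^ 2 * (2 * q ^ 1 * q')) = 0 :=
    hFfun.unique (hasDerivAt_const s 1)
  have hB : p * p' + F * F' * p * q ^ 2 + F ^ 2 * q * q' = 0 := by ring_nf; ring_nf at hB0; linarith
  have hA : p ^ 2 + F ^ 2 * q ^ 2 = 1 := harc s
  -- the key formula for u''
  have hκs : (p * q' - p' * q) * F + q * (1 + p ^ 2) * F' = a * F * p := by
    have := hsol s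
    rw [hκ] at this
    exact this
  have key : p' = q ^ 2 * F * F' - F * q * (a * F * p) := by
    rw [← hκs]
    linear_combination p * hB - p' * hA
  -- bounds
  have hq2 : F ^ 2 * q ^ 2 ≤ 1 := by nlinarith [sq_nonneg p]
  have hp1 : |p| ≤ 1 := by nlinarith [sq_abs p, abs_nonneg p]
  have hFq : F * |q| ≤ 1 := by nlinarith [sq_abs q, abs_nonneg q, mul_nonneg hFpos.le (abs_nonneg q)]
  rw [key]
  calc |q ^ 2 * F * F' - F * q * (a * F * p)|
      ≤ |q ^ 2 * F * F'| + |F * q * (a * F * p)| := abs_sub _ _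
    _ ≤ |F'| / F + |a| * F := by
        gcongr
        · rw [abs_mul, abs_mul, abs_of_nonneg (sq_nonneg q), abs_of_pos hFpos,
            le_div_iff₀ hFpos]
          nlinarith [abs_nonneg F', hq2]
        · simp only [abs_mul, abs_of_pos hFpos]
          have h1 : F * |q| * |p| ≤ 1 :=
            mul_le_one₀ hFq (abs_nonneg p) hp1
          nlinarith [mul_le_mul_of_nonneg_left h1 (mul_nonneg (abs_nonneg a) hFpos.le)]
    _ = |a| * F + |F'| / F := by ring
end

section
/- Let φ, ψ : ℝ → ℝ be smooth with φ(u) > 0 and φ'(u)² + ψ'(u)² = 1 for all u; let u, v : ℝ → ℝ be smooth with u'(s)² + φ(u(s))²·v'(s)² = 1 and u'(s)² < 1 for all s. Let a ∈ ℝ and suppose the geodesic curvature κ(s) = (u'(s)v''(s) − u''(s)v'(s))·φ(u(s)) + v'(s)(1 + u'(s)²)·φ'(u(s)) satisfies κ(s) = a·φ(u(s))·u'(s) for all s. Let ε ∈ {−1, 1} with ε·v'(s) > 0 for all s. Then for all s: u''(s)/(1 − u'(s)²) = −ε·a·φ(u(s))·u'(s)/√(1 − u'(s)²) + φ'(u(s))/φ(u(s)).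 -/
open Real

/-- For a rotational soliton with `u'² < 1` and `ε·v' > 0`
(ε = ±1), `u''/(1 − u'²) = −ε·a·φ(u)·u'/√(1 − u'²) + φ'(u)/φ(u)`. -/
theorem u_second_derivative_identity
    (φ ψ u v : ℝ → ℝ)
    (hφ : ContDiff ℝ (⊤ : ℕ∞) φ) (hψ : ContDiff ℝ (⊤ : ℕ∞) ψ)
    (hφpos : ∀ x, 0 < φ x)
    (hgen : ∀ x, deriv φ x ^ 2 + deriv ψ x ^ 2 = 1)
    (hu : ContDiff ℝ (⊤ : ℕ∞) u) (hv : ContDiff ℝ (⊤ : ℕ∞) v)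
    (harc : ∀ s, deriv u s ^ 2 + φ (u s) ^ 2 * deriv v s ^ 2 = 1)
    (hu' : ∀ s, deriv u s ^ 2 < 1)
    (a : ℝ)
    (κ : ℝ → ℝ)
    (hκ : κ = fun s =>
      (deriv u s * deriv (deriv v) s - deriv (deriv u) s * deriv v s) * φ (u s)
        + deriv v s * (1 + deriv u s ^ 2) * deriv φ (u s))
    (hsol : ∀ s, κ s = a * φ (u s) * deriv u s)
    (ε : ℝ) (hε : ε = 1 ∨ ε = -1)
    (hv' : ∀ s, ε * deriv v s > 0) :
    ∀ s : ℝ,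
      deriv (deriv u) s / (1 - deriv u s ^ 2)
        = -ε * a * φ (u s) * deriv u s / Real.sqrt (1 - deriv u s ^ 2)
          + deriv φ (u s) / φ (u s) := by
  intro s
  have hud : Differentiable ℝ u := hu.differentiable (by simp)
  have hu1 : ContDiff ℝ (↑(⊤:ℕ∞)) (deriv u) :=
    (contDiff_infty_iff_deriv.mp (hu.of_le (by simp))).2
  have hv1 : ContDiff ℝ (↑(⊤:ℕ∞)) (deriv v) :=
    (contDiff_infty_iff_deriv.mp (hv.of_le (by simp))).2
  have hU : HasDerivAt u (deriv u s) s := (hud s).hasDerivAt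
  have hU' : HasDerivAt (deriv u) (deriv (deriv u) s) s :=
    ((hu1.differentiable (by simp)) s).hasDerivAt
  have hV' : HasDerivAt (deriv v) (deriv (deriv v) s) s :=
    ((hv1.differentiable (by simp)) s).hasDerivAt
  have hφu : HasDerivAt (fun t => φ (u t)) (deriv φ (u s) * deriv u s) s :=
    ((hφ.differentiable (by simp) (u s)).hasDerivAt).comp s hU
  -- derivative of the arc-length identity
  have H : HasDerivAt (fun t => deriv u t ^ 2 + φ (u t) ^ 2 * deriv v t ^ 2)
      (2 * deriv u s * deriv (deriv u) s
        + (2 * φ (u s) * (deriv φ (u s) * deriv u s) * deriv v s ^ 2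
          + φ (u s) ^ 2 * (2 * deriv v s * deriv (deriv v) s))) s := by
    have h1 : HasDerivAt (fun t => deriv u t ^ 2)
        (2 * deriv u s * deriv (deriv u) s) s := by
      have := hU'.fun_pow 2
      simpa using this
    have h2 : HasDerivAt (fun t => φ (u t) ^ 2)
        (2 * φ (u s) * (deriv φ (u s) * deriv u s)) s := by
      have := hφu.fun_pow 2
      simpa [mul_assoc, mul_comm, mul_left_comm] using this
    have h3 : HasDerivAt (fun t => deriv v t ^ 2)
        (2 * deriv v s * deriv (deriv v) s) s := by
      have := hV'.fun_pow 2
      simpa using this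
    exact h1.add (h2.mul h3)
  have Hconst : HasDerivAt (fun t => deriv u t ^ 2 + φ (u t) ^ 2 * deriv v t ^ 2)
      (0 : ℝ) s := by
    have : (fun t => deriv u t ^ 2 + φ (u t) ^ 2 * deriv v t ^ 2) = fun _ => (1:ℝ) :=
      funext harc
    rw [this]
    exact hasDerivAt_const s 1
  have h2 : 2 * deriv u s * deriv (deriv u) s
        + (2 * φ (u s) * (deriv φ (u s) * deriv u s) * deriv v s ^ 2
          + φ (u s) ^ 2 * (2 * deriv v s * deriv (deriv v) s)) = 0 :=
    H.unique Hconst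
  -- the soliton equation
  have h3 : (deriv u s * deriv (deriv v) s - deriv (deriv u) s * deriv v s) * φ (u s)
        + deriv v s * (1 + deriv u s ^ 2) * deriv φ (u s)
      = a * φ (u s) * deriv u s := by
    have := hsol s
    rw [hκ] at this
    exact this
  have h1 : deriv u s ^ 2 + φ (u s) ^ 2 * deriv v s ^ 2 = 1 := harc s
  -- key algebraic identity for u''
  have hkey : deriv (deriv u) s
      = φ (u s) * deriv φ (u s) * deriv v s ^ 2
        - a * φ (u s) ^ 2 * deriv u s * deriv v s := by
    linear_combination (-(deriv (deriv u) s)) * h1 + (deriv u s / 2) * h2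
      - φ (u s) * deriv v s * h3
  have hP : 0 < φ (u s) := hφpos _
  have hεV : 0 < ε * deriv v s := hv' s
  have hV0 : deriv v s ≠ 0 := by
    rcases hε with h | h <;> subst h <;> intro h0 <;> rw [h0] at hεV <;> simp at hεV
  have hsq : Real.sqrt (1 - deriv u s ^ 2) = ε * (φ (u s) * deriv v s) := by
    have hpos : 0 < ε * (φ (u s) * deriv v s) := by
      rcases hε with h | h <;> subst h <;> nlinarith
    have h1' : 1 - deriv u s ^ 2 = (ε * (φ (u s) * deriv v s)) ^ 2 := by
      rcases hε with h | h <;> subst h <;> linear_combination -h1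
    rw [h1', Real.sqrt_sq hpos.le]
  have harc' : 1 - deriv u s ^ 2 = φ (u s) ^ 2 * deriv v s ^ 2 := by
    linear_combination -h1
  rw [hsq, harc', hkey]
  rcases hε with h | h <;> subst h <;> field_simp <;> ring
end

section
/- Let f : ℝ → ℝ be differentiable. If the limit of f(s) as s → ∞ exists (is finite) and the derivative f' is uniformly continuous on ℝ, then f'(s) → 0 as s → ∞. -/
/-!
By the mean value theorem, for every `d > 0` some `ξ` within `d` of `s` has
`f' ξ = (f (s + d) - f s) / d`. As `s → ∞` this difference quotient tends to `0` because `f`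
converges, while uniform continuity makes `|f' s - f' ξ|` small once `d` is small, uniformly in `s`.
-/

open Filter Topology

theorem Filter.Tendsto.sub_comp_add_const_atTop {G : Type*} [AddCommGroup G] [TopologicalSpace G]
    [IsTopologicalAddGroup G] {f : ℝ → G} {L : G} (hf : Tendsto f atTop (𝓝 L)) (d : ℝ) :
    Tendsto (fun s => f (s + d) - f s) atTop (𝓝 0) := by
  simpa using (hf.comp (tendsto_atTop_add_const_right atTop d tendsto_id)).sub hf

theorem abs_deriv_le_abs_slope_add {f : ℝ → ℝ} (hf : Differentiable ℝ f) {s d η : ℝ} (hd : 0 < d)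
    (hosc : ∀ x, dist x s < d → dist (deriv f x) (deriv f s) ≤ η) :
    |deriv f s| ≤ |(f (s + d) - f s) / d| + η := by
  obtain ⟨ξ, ⟨hsξ, hξd⟩, hslope⟩ := exists_deriv_eq_slope f (lt_add_of_pos_right s hd)
    hf.continuous.continuousOn hf.differentiableOn
  rw [add_sub_cancel_left] at hslope
  have hξ : dist ξ s < d := by
    rw [Real.dist_eq, abs_lt]
    constructor <;> linarith
  have hclose : |deriv f s - deriv f ξ| ≤ η := by
    rw [abs_sub_comm, ← Real.dist_eq]
    exact hosc ξ hξ
  rw [← hslope]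
  linarith [abs_sub_abs_le_abs_sub (deriv f s) (deriv f ξ)]

/-- Barbalat's lemma: If `f : ℝ → ℝ` is differentiable, `f` has a
finite limit at `+∞`, and `f'` is uniformly continuous, then `f'(s) → 0` as
`s → ∞`. -/
theorem barbalat_lemma
    (f : ℝ → ℝ) (hf : Differentiable ℝ f)
    (L : ℝ) (hL : Tendsto f atTop (𝓝 L))
    (huc : UniformContinuous (deriv f)) :
    Tendsto (deriv f) atTop (𝓝 0) := by
  rw [Metric.tendsto_nhds]
  intro ε hε
  obtain ⟨δ, hδ, hosc⟩ := Metric.uniformContinuous_iff.mp huc (ε / 2) (half_pos hε)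
  have hslope : Tendsto (fun s => (f (s + δ) - f s) / δ) atTop (𝓝 0) := by
    simpa using (hL.sub_comp_add_const_atTop δ).div_const δ
  filter_upwards [(Metric.tendsto_nhds.mp hslope) (ε / 2) (half_pos hε)] with s hs
  rw [Real.dist_eq, sub_zero] at hs ⊢
  have hderiv := abs_deriv_le_abs_slope_add (s := s) hf hδ fun x hx => (hosc hx).le
  linarith
end

section
/- Let φ, ψ : ℝ → ℝ be smooth with φ(u) > 0 and φ'(u)² + ψ'(u)² = 1 for all u; let u, v : ℝ → ℝ be smooth with u'(s)² + φ(u(s))²·v'(s)² = 1 for all s, and let a ∈ ℝ. Suppose the geodesic curvature κ(s) = (u'(s)v''(s) − u''(s)v'(s))·φ(u(s)) + v'(s)(1 + u'(s)²)·φ'(u(s)) satisfies κ(s) = a·φ(u(s))·u'(s) for all s. Assume the total squared geodesic curvature is finite, ∫_ℝ κ(s)² ds < ∞, and that there are constants m > 0, M > 0, C > 0 with m ≤ φ(u(s)) ≤ M and |φ'(u(s))| ≤ C for all s. Then κ(s) → 0 as s → ∞ and κ(s) → 0 as s → −∞. -/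
open Real Filter Topology MeasureTheory


private lemma abs_mul_le' {x y X Y : ℝ} (hx : |x| ≤ X) (hy : |y| ≤ Y) : |x * y| ≤ X * Y := by
  rw [abs_mul]
  exact mul_le_mul hx hy (abs_nonneg _) ((abs_nonneg _).trans hx)

private lemma tendsto_zero_of_sq_integrable (f g : ℝ → ℝ)
    (hd : ∀ s, HasDerivAt f (g s) s)
    (K L : ℝ) (hK : ∀ s, |f s| ≤ K) (hL : ∀ s, |g s| ≤ L)
    (hint : Integrable (fun s => f s ^ 2)) :
    Tendsto f atTop (𝓝 0) ∧ Tendsto f atBot (𝓝 0) := by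
  have hdf : Differentiable ℝ f := fun s => (hd s).differentiableAt
  have hfc : Continuous f := hdf.continuous
  have hgm : AEStronglyMeasurable g (volume : Measure ℝ) := by
    have : g = deriv f := funext fun s => ((hd s).deriv).symm
    rw [this]
    exact (measurable_deriv f).aestronglyMeasurable
  have hgd : ∀ s, HasDerivAt (fun t => f t ^ 3) (3 * f s ^ 2 * g s) s := by
    intro s
    have h := (hd s).pow 3
    simp at h
    exact h
  have hgint : Integrable (fun s => f s ^ 3) := by
    refine (hint.const_mul K).mono' ((hfc.pow 3).aestronglyMeasurable) (ae_of_all _ fun s => ?_)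
    have h1 := hK s
    have h0 := abs_nonneg (f s)
    rw [Real.norm_eq_abs, abs_pow]
    nlinarith [sq_abs (f s), sq_nonneg (f s)]
  have hg'int : Integrable (fun s => 3 * f s ^ 2 * g s) := by
    refine (hint.const_mul (3 * L)).mono'
      ((((hfc.pow 2).aestronglyMeasurable.const_mul 3).mul hgm)) (ae_of_all _ fun s => ?_)
    have h1 := hL s
    rw [Real.norm_eq_abs, abs_mul, abs_mul]
    have : |(3 : ℝ)| = 3 := by norm_num
    rw [this, abs_pow, sq_abs]
    have h2 : (0:ℝ) ≤ 3 * f s ^ 2 := by positivity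
    nlinarith [sq_nonneg (f s), abs_nonneg (g s)]
  have htop : Tendsto (fun s => f s ^ 3) atTop (𝓝 0) :=
    tendsto_zero_of_hasDerivAt_of_integrableOn_Ioi (a := 0) (fun x _ => hgd x)
      hg'int.integrableOn hgint.integrableOn
  have hbot : Tendsto (fun s => f s ^ 3) atBot (𝓝 0) :=
    tendsto_zero_of_hasDerivAt_of_integrableOn_Iic (a := 0) (fun x _ => hgd x)
      hg'int.integrableOn hgint.integrableOn
  have recov : ∀ (l : Filter ℝ), Tendsto (fun s => f s ^ 3) l (𝓝 0) → Tendsto f l (𝓝 0) := by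
    intro l hl
    rw [tendsto_zero_iff_abs_tendsto_zero]
    have h2 : Tendsto (fun s => |f s| ^ 3) l (𝓝 0) := by
      have := hl.abs
      simpa [abs_pow] using this
    have h3 : ContinuousAt (fun x : ℝ => x ^ (((3:ℕ) : ℝ))⁻¹) 0 :=
      Real.continuousAt_rpow_const 0 _ (Or.inr (by norm_num))
    have h4 := h3.tendsto.comp h2
    have h5 : ((0:ℝ) ^ (((3:ℕ):ℝ))⁻¹) = 0 := Real.zero_rpow (by norm_num)
    rw [h5] at h4
    exact h4.congr fun s => Real.pow_rpow_inv_natCast (abs_nonneg _) (by norm_num)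
  exact ⟨recov _ htop, recov _ hbot⟩

/-- For a rotational soliton with finite total squared geodesic
curvature and `m ≤ φ(u(s)) ≤ M`, `|φ'(u(s))| ≤ C`, the geodesic curvature tends
to `0` at both ends. -/
theorem kappa_tends_to_zero
    (φ ψ u v : ℝ → ℝ)
    (hφ : ContDiff ℝ (⊤ : ℕ∞) φ) (hψ : ContDiff ℝ (⊤ : ℕ∞) ψ)
    (hφpos : ∀ x, 0 < φ x)
    (hgen : ∀ x, deriv φ x ^ 2 + deriv ψ x ^ 2 = 1)
    (hu : ContDiff ℝ (⊤ : ℕ∞) u) (hv : ContDiff ℝ (⊤ : ℕ∞) v)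
    (harc : ∀ s, deriv u s ^ 2 + φ (u s) ^ 2 * deriv v s ^ 2 = 1)
    (a : ℝ)
    (κ : ℝ → ℝ)
    (hκ : κ = fun s =>
      (deriv u s * deriv (deriv v) s - deriv (deriv u) s * deriv v s) * φ (u s)
        + deriv v s * (1 + deriv u s ^ 2) * deriv φ (u s))
    (hsol : ∀ s, κ s = a * φ (u s) * deriv u s)
    (hint : Integrable (fun s => κ s ^ 2))
    (m M C : ℝ) (hm : 0 < m) (hM : 0 < M) (hC : 0 < C)
    (hφm : ∀ s, m ≤ φ (u s)) (hφM : ∀ s, φ (u s) ≤ M)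
    (hφ' : ∀ s, |deriv φ (u s)| ≤ C) :
    Tendsto κ atTop (𝓝 0) ∧ Tendsto κ atBot (𝓝 0) := by
  -- basic differentiability
  have hφd : Differentiable ℝ φ := hφ.differentiable (by simp)
  have hud : ∀ s, HasDerivAt u (deriv u s) s :=
    fun s => ((hu.differentiable (by simp)) s).hasDerivAt
  have huc : Differentiable ℝ (deriv u) :=
    (contDiff_infty_iff_deriv.mp (hu.of_le (by simp))).2.differentiable (by simp)
  have hvc : Differentiable ℝ (deriv v) :=
    (contDiff_infty_iff_deriv.mp (hv.of_le (by simp))).2.differentiable (by simp)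
  have hAd : ∀ s, HasDerivAt (deriv u) (deriv (deriv u) s) s :=
    fun s => (huc s).hasDerivAt
  have hBd : ∀ s, HasDerivAt (deriv v) (deriv (deriv v) s) s :=
    fun s => (hvc s).hasDerivAt
  have hpd : ∀ s, HasDerivAt (fun t => φ (u t)) (deriv φ (u s) * deriv u s) s := by
    intro s
    exact ((hφd (u s)).hasDerivAt).comp s (hud s)
  -- differentiate the arc-length identity
  have eq1 : ∀ s, 2 * deriv u s * deriv (deriv u) s
      + (2 * φ (u s) * (deriv φ (u s) * deriv u s)) * deriv v s ^ 2
      + φ (u s) ^ 2 * (2 * deriv v s * deriv (deriv v) s) = 0 := by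
    intro s
    have hF : (fun t => deriv u t ^ 2 + φ (u t) ^ 2 * deriv v t ^ 2) = fun _ => (1:ℝ) :=
      funext harc
    have h1 : HasDerivAt (fun t => deriv u t ^ 2 + φ (u t) ^ 2 * deriv v t ^ 2)
        (2 * deriv u s ^ 1 * deriv (deriv u) s
          + ((2 * (φ (u s)) ^ 1 * (deriv φ (u s) * deriv u s)) * deriv v s ^ 2
            + φ (u s) ^ 2 * (2 * deriv v s ^ 1 * deriv (deriv v) s))) s :=
      ((hAd s).pow 2).add (((hpd s).pow 2).mul ((hBd s).pow 2))
    have h2 : HasDerivAt (fun t => deriv u t ^ 2 + φ (u t) ^ 2 * deriv v t ^ 2) 0 s := by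
      rw [hF]; exact hasDerivAt_const s 1
    have := h1.unique h2
    linarith [this]
  -- solve for u''
  have key : ∀ s, deriv (deriv u) s =
      -(φ (u s) * deriv φ (u s) * (deriv u s * deriv u s) * (deriv v s * deriv v s))
      + -(φ (u s) * deriv v s * κ s)
      + φ (u s) * (deriv v s * deriv v s) * (1 + deriv u s * deriv u s) * deriv φ (u s) := by
    intro s
    have e2 : κ s = (deriv u s * deriv (deriv v) s - deriv (deriv u) s * deriv v s) * φ (u s)
        + deriv v s * (1 + deriv u s ^ 2) * deriv φ (u s) := by rw [hκ]
    have e1 := eq1 s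
    have e3 := harc s
    linear_combination (φ (u s) * deriv v s) * e2 + (deriv u s / 2) * e1
      - (deriv (deriv u) s) * e3
  -- pointwise bounds
  have hpb : ∀ s, |φ (u s)| ≤ M := fun s => by
    rw [abs_of_pos (hφpos (u s))]; exact hφM s
  have hAb : ∀ s, |deriv u s| ≤ 1 := by
    intro s
    have h := harc s
    nlinarith [sq_abs (deriv u s), abs_nonneg (deriv u s), sq_nonneg (φ (u s) * deriv v s),
      mul_pow (φ (u s)) (deriv v s) 2]
  have hBb : ∀ s, |deriv v s| ≤ 1 / m := by
    intro s
    have h := harc s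
    have hp := hφm s
    have hB2 : deriv v s ^ 2 ≤ (1 / m) ^ 2 := by
      have h0 : m ^ 2 ≤ φ (u s) ^ 2 := by nlinarith
      have h1 : m ^ 2 * deriv v s ^ 2 ≤ φ (u s) ^ 2 * deriv v s ^ 2 :=
        mul_le_mul_of_nonneg_right h0 (sq_nonneg _)
      have h2 : φ (u s) ^ 2 * deriv v s ^ 2 ≤ 1 := by nlinarith [sq_nonneg (deriv u s)]
      rw [div_pow, one_pow, le_div_iff₀ (by positivity)]
      linarith
    nlinarith [sq_abs (deriv v s), abs_nonneg (deriv v s), hB2,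
      le_of_lt (one_div_pos.mpr hm)]
  have hκb : ∀ s, |κ s| ≤ |a| * M * 1 := by
    intro s
    rw [hsol s]
    exact abs_mul_le' (abs_mul_le' (le_refl |a|) (hpb s)) (hAb s)
  set Kd : ℝ := M * C * (1 * 1) * ((1 / m) * (1 / m)) + M * (1 / m) * (|a| * M * 1)
      + M * ((1 / m) * (1 / m)) * 2 * C with hKd
  have hA'b : ∀ s, |deriv (deriv u) s| ≤ Kd := by
    intro s
    have h1A : |1 + deriv u s * deriv u s| ≤ 2 := by
      rw [abs_of_nonneg (by nlinarith [sq_nonneg (deriv u s)])]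
      nlinarith [harc s, sq_nonneg (φ (u s) * deriv v s), mul_pow (φ (u s)) (deriv v s) 2]
    have b1 : |-(φ (u s) * deriv φ (u s) * (deriv u s * deriv u s) * (deriv v s * deriv v s))|
        ≤ M * C * (1 * 1) * ((1 / m) * (1 / m)) := by
      rw [abs_neg]
      exact abs_mul_le' (abs_mul_le' (abs_mul_le' (hpb s) (hφ' s))
        (abs_mul_le' (hAb s) (hAb s))) (abs_mul_le' (hBb s) (hBb s))
    have b2 : |-(φ (u s) * deriv v s * κ s)| ≤ M * (1 / m) * (|a| * M * 1) := by
      rw [abs_neg]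
      exact abs_mul_le' (abs_mul_le' (hpb s) (hBb s)) (hκb s)
    have b3 : |φ (u s) * (deriv v s * deriv v s) * (1 + deriv u s * deriv u s) * deriv φ (u s)|
        ≤ M * ((1 / m) * (1 / m)) * 2 * C :=
      abs_mul_le' (abs_mul_le' (abs_mul_le' (hpb s) (abs_mul_le' (hBb s) (hBb s))) h1A) (hφ' s)
    calc |deriv (deriv u) s| = _ := by rw [key s]
      _ ≤ _ := abs_add_three _ _ _
      _ ≤ Kd := by rw [hKd]; exact add_le_add (add_le_add b1 b2) b3
  -- derivative of κ
  have hκd : ∀ s, HasDerivAt κ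
      (a * (deriv φ (u s) * deriv u s * deriv u s + φ (u s) * deriv (deriv u) s)) s := by
    intro s
    have hfun : κ = fun t => a * (φ (u t) * deriv u t) := by
      funext t; rw [hsol t]; ring
    rw [hfun]
    exact (((hpd s).mul (hAd s)).const_mul a).congr_deriv (by ring)
  have hκ'b : ∀ s, |a * (deriv φ (u s) * deriv u s * deriv u s + φ (u s) * deriv (deriv u) s)|
      ≤ |a| * (C * 1 * 1 + M * Kd) := by
    intro s
    rw [abs_mul]
    refine mul_le_mul_of_nonneg_left ?_ (abs_nonneg a)
    refine (abs_add_le _ _).trans (add_le_add ?_ ?_)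
    · exact abs_mul_le' (abs_mul_le' (hφ' s) (hAb s)) (hAb s)
    · exact abs_mul_le' (hpb s) (hA'b s)
  exact tendsto_zero_of_sq_integrable κ _ hκd (|a| * M * 1) (|a| * (C * 1 * 1 + M * Kd))
    hκb hκ'b hint
end

section
/- Let φ, ψ : ℝ → ℝ be smooth with φ(u) > 0 and φ'(u)² + ψ'(u)² = 1 for all u; let u, v : ℝ → ℝ be smooth with u'(s)² + φ(u(s))²·v'(s)² = 1 for all s, and let a ∈ ℝ with a ≠ 0. Suppose the geodesic curvature κ(s) = (u'(s)v''(s) − u''(s)v'(s))·φ(u(s)) + v'(s)(1 + u'(s)²)·φ'(u(s)) satisfies κ(s) = a·φ(u(s))·u'(s) for all s. Assume ∫_ℝ κ(s)² ds < ∞ and that there are constants m > 0, M > 0, C > 0 with m ≤ φ(u(s)) ≤ M and |φ'(u(s))| ≤ C for all s. Then u'(s) → 0 as s → ∞ and u'(s) → 0 as s → −∞; that is, each end of the curve becomes orthogonal to the meridians and is asymptotic to a parallel. -/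
open Real Filter Topology MeasureTheory Set ContDiff

lemma tendsto_atTop_zero_of_integrable_of_lipschitz (g : ℝ → ℝ)
    (hg0 : ∀ x, 0 ≤ g x) (hgi : Integrable g) (K : NNReal)
    (hlip : LipschitzWith K g) : Tendsto g atTop (𝓝 0) := by
  have hKr : (0:ℝ) < (K:ℝ) + 1 := by positivity
  have hlip' : LipschitzWith (K + 1) g := hlip.weaken (by simp)
  rw [tendsto_order]
  constructor
  · intro b hb
    exact Eventually.of_forall fun s => lt_of_lt_of_le hb (hg0 s)
  · intro ε hε
    set Kr : ℝ := (K:ℝ) + 1 with hKrdef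
    set δ : ℝ := ε / (2 * Kr) with hδdef
    have hδ : 0 < δ := by positivity
    -- tail integral tendsto 0
    have htail : Tendsto (fun n : ℕ => ∫ x in Ici (n:ℝ), g x) atTop (𝓝 0) := by
      have h := Antitone.tendsto_setIntegral (s := fun n : ℕ => Ici (n:ℝ))
        (fun i => measurableSet_Ici) (fun i j hij => Ici_subset_Ici.2 (by exact_mod_cast hij))
        hgi.integrableOn
      have hempty : (⋂ n : ℕ, Ici (n:ℝ)) = ∅ := by
        ext x
        simp only [mem_iInter, mem_Ici, mem_empty_iff_false, iff_false, not_forall]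
        obtain ⟨n, hn⟩ := exists_nat_gt x
        exact ⟨n, not_le.2 hn⟩
      rwa [hempty, setIntegral_empty] at h
    obtain ⟨N, hN⟩ : ∃ N : ℕ, ∫ x in Ici (N:ℝ), g x < δ * ε / 2 := by
      have : ∀ᶠ n : ℕ in atTop, ∫ x in Ici (n:ℝ), g x < δ * ε / 2 :=
        htail.eventually (gt_mem_nhds (by positivity))
      exact this.exists
    filter_upwards [eventually_ge_atTop ((N:ℝ))] with s hs
    -- lower bound on g over the interval
    have h1 : ∀ t ∈ Ioc s (s + δ), g s - Kr * δ ≤ g t := by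
      intro t ht
      have hd : dist (g s) (g t) ≤ Kr * δ := by
        calc dist (g s) (g t) ≤ Kr * dist s t := hlip'.dist_le_mul s t
        _ ≤ Kr * δ := by
            apply mul_le_mul_of_nonneg_left _ hKr.le
            rw [Real.dist_eq, abs_le]
            constructor
            · linarith [ht.1.le, ht.2, hδ.le]
            · linarith [ht.1.le, ht.2, hδ.le]
      have := abs_sub_abs_le_abs_sub (g s) (g t)
      rw [Real.dist_eq, abs_le] at hd
      linarith [hd.1]
    have h2 : (g s - Kr * δ) * δ ≤ ∫ t in Ioc s (s + δ), g t := by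
      have hmono : ∫ _t in Ioc s (s + δ), (g s - Kr * δ) ≤ ∫ t in Ioc s (s + δ), g t :=
        setIntegral_mono_on (integrableOn_const (by simp) (by simp))
          hgi.integrableOn measurableSet_Ioc h1
      rwa [setIntegral_const, measureReal_def, Real.volume_Ioc, show s + δ - s = δ by ring,
        ENNReal.toReal_ofReal hδ.le, smul_eq_mul, mul_comm] at hmono
    have h3 : ∫ t in Ioc s (s + δ), g t ≤ ∫ t in Ici (N:ℝ), g t := by
      apply setIntegral_mono_set hgi.integrableOn
        (Eventually.of_forall fun t => hg0 t)
      apply HasSubset.Subset.eventuallyLE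
      intro t ht
      exact le_trans hs ht.1.le
    have hKrδ : Kr * δ = ε / 2 := by
      field_simp [hδdef]
      rw [hδdef, mul_div_assoc', div_mul_eq_mul_div, div_eq_iff (by positivity)]; ring
    by_contra hcon
    push_neg at hcon
    have h4 : (g s - ε / 2) * δ < (ε / 2) * δ := by
      rw [← hKrδ]
      calc (g s - Kr * δ) * δ ≤ ∫ t in Ioc s (s + δ), g t := h2
      _ ≤ ∫ t in Ici (N:ℝ), g t := h3
      _ < δ * ε / 2 := hN
      _ = Kr * δ * δ := by rw [hKrδ]; ring
    have h5 : g s - ε / 2 < ε / 2 := lt_of_mul_lt_mul_right h4 hδ.le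
    linarith

lemma tendsto_atBot_zero_of_integrable_of_lipschitz (g : ℝ → ℝ)
    (hg0 : ∀ x, 0 ≤ g x) (hgi : Integrable g) (K : NNReal)
    (hlip : LipschitzWith K g) : Tendsto g atBot (𝓝 0) := by
  have hlneg : LipschitzWith 1 (fun x : ℝ => -x) := LipschitzWith.id.neg
  have hlip2 : LipschitzWith K (fun x => g (-x)) := by
    have := hlip.comp hlneg
    rwa [mul_one] at this
  have h := tendsto_atTop_zero_of_integrable_of_lipschitz (fun x => g (-x))
    (fun x => hg0 _) hgi.comp_neg K hlip2
  have h2 := h.comp tendsto_neg_atBot_atTop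
  refine h2.congr fun x => by simp

/-- For a rotational soliton (`a ≠ 0`) with finite total squared
geodesic curvature and `m ≤ φ(u(s)) ≤ M`, `|φ'(u(s))| ≤ C`, the ends of the
curve are asymptotic to parallels: `u'(s) → 0` as `s → ±∞`. -/
theorem ends_asymptotic_to_parallels
    (φ ψ u v : ℝ → ℝ)
    (hφ : ContDiff ℝ (⊤ : ℕ∞) φ) (hψ : ContDiff ℝ (⊤ : ℕ∞) ψ)
    (hφpos : ∀ x, 0 < φ x)
    (hgen : ∀ x, deriv φ x ^ 2 + deriv ψ x ^ 2 = 1)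
    (hu : ContDiff ℝ (⊤ : ℕ∞) u) (hv : ContDiff ℝ (⊤ : ℕ∞) v)
    (harc : ∀ s, deriv u s ^ 2 + φ (u s) ^ 2 * deriv v s ^ 2 = 1)
    (a : ℝ) (ha : a ≠ 0)
    (κ : ℝ → ℝ)
    (hκ : κ = fun s =>
      (deriv u s * deriv (deriv v) s - deriv (deriv u) s * deriv v s) * φ (u s)
        + deriv v s * (1 + deriv u s ^ 2) * deriv φ (u s))
    (hsol : ∀ s, κ s = a * φ (u s) * deriv u s)
    (hint : Integrable (fun s => κ s ^ 2))
    (m M C : ℝ) (hm : 0 < m) (hM : 0 < M) (hC : 0 < C)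
    (hφm : ∀ s, m ≤ φ (u s)) (hφM : ∀ s, φ (u s) ≤ M)
    (hφ' : ∀ s, |deriv φ (u s)| ≤ C) :
    Tendsto (deriv u) atTop (𝓝 0) ∧ Tendsto (deriv u) atBot (𝓝 0) := by
  have hdu : ContDiff ℝ ∞ (deriv u) := (contDiff_infty_iff_deriv.mp (hu.of_le (by simp))).2
  have hdv : ContDiff ℝ ∞ (deriv v) := (contDiff_infty_iff_deriv.mp (hv.of_le (by simp))).2
  have hud : ∀ s, HasDerivAt u (deriv u s) s :=
    fun s => (hu.differentiable (by simp) s).hasDerivAt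
  have hdud : ∀ s, HasDerivAt (deriv u) (deriv (deriv u) s) s :=
    fun s => (hdu.differentiable (by simp) s).hasDerivAt
  have hdvd : ∀ s, HasDerivAt (deriv v) (deriv (deriv v) s) s :=
    fun s => (hdv.differentiable (by simp) s).hasDerivAt
  have hPd : ∀ s, HasDerivAt (fun t => φ (u t)) (deriv φ (u s) * deriv u s) s :=
    fun s => ((hφ.differentiable (by simp) (u s)).hasDerivAt).comp s (hud s)
  -- differentiate the arc-length relation
  have eq1 : ∀ s, deriv u s * deriv (deriv u) s
      + φ (u s) * deriv φ (u s) * deriv u s * deriv v s ^ 2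
      + φ (u s) ^ 2 * (deriv v s * deriv (deriv v) s) = 0 := by
    intro s
    have hF : HasDerivAt (fun t => deriv u t ^ 2 + (φ (u t)) ^ 2 * deriv v t ^ 2)
        ((2 * deriv u s ^ 1 * deriv (deriv u) s)
          + ((2 * φ (u s) ^ 1 * (deriv φ (u s) * deriv u s)) * deriv v s ^ 2
            + φ (u s) ^ 2 * (2 * deriv v s ^ 1 * deriv (deriv v) s))) s :=
      ((hdud s).pow 2).add (((hPd s).pow 2).mul ((hdvd s).pow 2))
    have hconst : (fun t => deriv u t ^ 2 + (φ (u t)) ^ 2 * deriv v t ^ 2)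
        = fun _ => (1 : ℝ) := funext harc
    have h0 := hF.deriv
    rw [hconst] at h0
    simp only [deriv_const'] at h0
    linear_combination (-1/2 : ℝ) * h0
  -- the soliton equation
  have eq2 : ∀ s, (deriv u s * deriv (deriv v) s - deriv (deriv u) s * deriv v s) * φ (u s)
      + deriv v s * (1 + deriv u s ^ 2) * deriv φ (u s) = a * φ (u s) * deriv u s := by
    intro s
    have := hsol s
    rw [hκ] at this
    exact this
  -- solve for u''
  have formula : ∀ s, deriv (deriv u) s
      = φ (u s) * deriv φ (u s) * deriv v s ^ 2
        - a * φ (u s) ^ 2 * deriv u s * deriv v s := by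
    intro s
    linear_combination (-(deriv (deriv u) s)) * (harc s) + deriv u s * eq1 s
      - φ (u s) * deriv v s * eq2 s
  -- basic bounds
  have hdu1 : ∀ s, |deriv u s| ≤ 1 := by
    intro s
    have h := harc s
    rw [abs_le]
    constructor <;> nlinarith [sq_nonneg (φ (u s) * deriv v s), sq_nonneg (deriv u s + 1),
      sq_nonneg (deriv u s - 1)]
  have hdvb : ∀ s, |deriv v s| ≤ 1 / m := by
    intro s
    have h := harc s
    have hm' := hφm s
    have hp := hφpos (u s)
    have hPP : m ^ 2 ≤ φ (u s) ^ 2 := by nlinarith [hm.le, hm']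
    have h2 : m ^ 2 * deriv v s ^ 2 ≤ 1 := by
      nlinarith [mul_le_mul_of_nonneg_right hPP (sq_nonneg (deriv v s)),
        sq_nonneg (deriv u s)]
    have hminv : m * (1 / m) = 1 := by field_simp
    rw [abs_le]
    constructor
    · nlinarith [h2, sq_nonneg (m * deriv v s + 1), hm, hminv]
    · nlinarith [h2, sq_nonneg (m * deriv v s - 1), hm, hminv]
  set K0 : ℝ := M * C * (1 / m) ^ 2 + |a| * M ^ 2 * (1 / m) with hK0def
  have hK0 : 0 < K0 := by positivity
  have hddu : ∀ s, |deriv (deriv u) s| ≤ K0 := by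
    intro s
    rw [formula s]
    have hPabs : |φ (u s)| ≤ M := by
      rw [abs_of_pos (hφpos (u s))]; exact hφM s
    have h1 : |φ (u s) * deriv φ (u s) * deriv v s ^ 2| ≤ M * C * (1 / m) ^ 2 := by
      rw [abs_mul, abs_mul, abs_pow]
      gcongr <;> first
        | exact hPabs | exact hφ' s | exact hdvb s | exact hdu1 s
        | positivity | linarith [hC, hm, hM] | exact (abs_nonneg _).trans (hφ' s)
    have h2 : |a * φ (u s) ^ 2 * deriv u s * deriv v s| ≤ |a| * M ^ 2 * (1 / m) := by
      rw [abs_mul, abs_mul, abs_mul, abs_pow]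
      calc |a| * |φ (u s)| ^ 2 * |deriv u s| * |deriv v s|
          ≤ |a| * M ^ 2 * 1 * (1 / m) := by
            gcongr <;> first
              | exact hPabs | exact hdu1 s | exact hdvb s
              | positivity | linarith [hC, hm, hM]
        _ = |a| * M ^ 2 * (1 / m) := by ring
    calc |φ (u s) * deriv φ (u s) * deriv v s ^ 2
          - a * φ (u s) ^ 2 * deriv u s * deriv v s|
        ≤ |φ (u s) * deriv φ (u s) * deriv v s ^ 2|
          + |a * φ (u s) ^ 2 * deriv u s * deriv v s| := abs_sub _ _
      _ ≤ K0 := by rw [hK0def]; linarith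
  -- the squared derivative
  set g : ℝ → ℝ := fun s => deriv u s ^ 2 with hgdef
  have hg0 : ∀ s, 0 ≤ g s := fun s => sq_nonneg _
  have hgd : ∀ s, HasDerivAt g (2 * deriv u s ^ 1 * deriv (deriv u) s) s :=
    fun s => (hdud s).pow 2
  have hgdiff : Differentiable ℝ g := fun s => (hgd s).differentiableAt
  have hglip : LipschitzWith (Real.toNNReal (2 * K0)) g := by
    apply lipschitzWith_of_nnnorm_deriv_le hgdiff
    intro s
    have hb : ‖deriv g s‖ ≤ 2 * K0 := by
      rw [(hgd s).deriv, Real.norm_eq_abs]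
      have := hddu s
      have := hdu1 s
      calc |2 * deriv u s ^ 1 * deriv (deriv u) s|
          = 2 * |deriv u s| * |deriv (deriv u) s| := by
            rw [abs_mul, abs_mul]; simp
        _ ≤ 2 * 1 * K0 := by
            gcongr <;> first
              | exact hdu1 s | exact hddu s
              | exact (abs_nonneg _).trans (hddu s) | positivity
        _ = 2 * K0 := by ring
    rw [← Real.toNNReal_coe (r := ‖deriv g s‖₊)]
    exact Real.toNNReal_le_toNNReal (by rwa [coe_nnnorm])
  -- integrability of g
  have ha2 : (0:ℝ) < a ^ 2 * m ^ 2 := by positivity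
  have hgi : Integrable g := by
    apply Integrable.mono' (hint.div_const (a ^ 2 * m ^ 2))
    · exact ((hdu.continuous.pow 2).aestronglyMeasurable)
    · refine Eventually.of_forall fun s => ?_
      rw [Real.norm_eq_abs, abs_of_nonneg (sq_nonneg _)]
      have key : a ^ 2 * m ^ 2 * deriv u s ^ 2 ≤ κ s ^ 2 := by
        rw [hsol s]
        have hPP : m ^ 2 ≤ φ (u s) ^ 2 := by nlinarith [hφm s, hm.le]
        nlinarith [mul_le_mul_of_nonneg_left hPP (sq_nonneg (a * deriv u s))]
      rw [le_div_iff₀ ha2]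
      simp only [hgdef]
      nlinarith [key]
  -- conclude
  have htop : Tendsto g atTop (𝓝 0) :=
    tendsto_atTop_zero_of_integrable_of_lipschitz g hg0 hgi _ hglip
  have hbot : Tendsto g atBot (𝓝 0) :=
    tendsto_atBot_zero_of_integrable_of_lipschitz g hg0 hgi _ hglip
  have hsq : ∀ s, ‖deriv u s‖ ≤ Real.sqrt (g s) := by
    intro s
    rw [Real.norm_eq_abs, hgdef, ← Real.sqrt_sq_eq_abs]
  constructor
  · refine squeeze_zero_norm hsq ?_
    have := (Real.continuous_sqrt.tendsto 0).comp htop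
    simpa [Function.comp_def] using this
  · refine squeeze_zero_norm hsq ?_
    have := (Real.continuous_sqrt.tendsto 0).comp hbot
    simpa [Function.comp_def] using this
end

section
/- Fix 0 < r < R and let φ(u) = R + r·cos(u/r) and ψ(u) = r·sin(u/r), the unit-speed generating curve of the torus of revolution. Let u, v : ℝ → ℝ be smooth with u'(s)² + φ(u(s))²·v'(s)² = 1 for all s, and let a ∈ ℝ with a ≠ 0. Suppose the geodesic curvature κ(s) = (u'(s)v''(s) − u''(s)v'(s))·φ(u(s)) + v'(s)(1 + u'(s)²)·φ'(u(s)) satisfies κ(s) = a·φ(u(s))·u'(s) for all s, and assume ∫_ℝ κ(s)² ds < ∞. Then u'(s) → 0 as s → ∞ and u'(s) → 0 as s → −∞; that is, the soliton is asymptotic to the equators of the torus. -/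
open Real Filter Topology MeasureTheory

private lemma barbalat_atTop (f : ℝ → ℝ) (hf0 : ∀ x, 0 ≤ f x) (C : ℝ) (hC : 0 < C)
    (hlip : ∀ x y, |f x - f y| ≤ C * |x - y|)
    (hint : Integrable f) : Tendsto f atTop (𝓝 0) := by
  by_contra h
  rw [NormedAddCommGroup.tendsto_nhds_zero] at h
  push_neg at h
  obtain ⟨ε, hε, hfreq⟩ := h
  have hfreq' : ∀ b : ℝ, ∃ x, b ≤ x ∧ ε ≤ f x := by
    intro b
    obtain ⟨x, hx1, hx2⟩ := (frequently_atTop.mp hfreq) b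
    exact ⟨x, hx1, by
      have := hf0 x
      rw [Real.norm_eq_abs, abs_of_nonneg this] at hx2
      exact hx2⟩
  set δ := ε / (2 * C) with hδdef
  have hδ : 0 < δ := div_pos hε (by linarith)
  choose g hg1 hg2 using hfreq'
  let s : ℕ → ℝ := fun n => Nat.rec (g 0) (fun _ x => g (x + δ + 1)) n
  have hs_step : ∀ n, s n + δ + 1 ≤ s (n + 1) := fun n => hg1 (s n + δ + 1)
  have hs_f : ∀ n, ε ≤ f (s n) := by
    intro n; cases n with
    | zero => exact hg2 0
    | succ m => exact hg2 (s m + δ + 1)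
  have hs_mono : ∀ m n : ℕ, m < n → s m + δ + 1 ≤ s n := by
    intro m n hmn
    induction n with
    | zero => omega
    | succ k ih =>
      rcases Nat.lt_succ_iff_lt_or_eq.mp hmn with h' | h'
      · linarith [hs_step k, ih h']
      · subst h'; exact hs_step m
  set A := {x : ℝ | ε / 2 ≤ f x} with hA
  have hsub : ∀ n, Set.Icc (s n) (s n + δ) ⊆ A := by
    intro n x hx
    have h1 : |f (s n) - f x| ≤ C * |s n - x| := hlip _ _
    have h2 : |s n - x| ≤ δ := by
      rw [abs_le]; constructor <;> [linarith [hx.2]; linarith [hx.1]]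
    have : f (s n) - f x ≤ C * δ := le_trans (le_trans (le_abs_self _) h1)
      (by nlinarith)
    have hCδ : C * δ = ε / 2 := by
      rw [hδdef, mul_div_assoc', mul_comm 2 C, mul_div_mul_left _ _ hC.ne']
    have := hs_f n
    simp only [hA, Set.mem_setOf_eq]
    linarith
  have key : ∀ (a b c d : ℝ), b < c → Disjoint (Set.Icc a b) (Set.Icc c d) := by
    intro a b c d h
    exact Set.disjoint_left.mpr (fun x hx hx2 => absurd (hx.2.trans_lt h) (not_lt.mpr hx2.1))
  have hdisj : Pairwise (Function.onFun Disjoint (fun n => Set.Icc (s n) (s n + δ))) := by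
    intro m n hmn
    rcases hmn.lt_or_gt with h' | h'
    · exact key _ _ _ _ (by have := hs_mono m n h'; linarith)
    · exact (key _ _ _ _ (by have := hs_mono n m h'; linarith)).symm
  have hmeas : volume (⋃ n, Set.Icc (s n) (s n + δ)) = ⊤ := by
    rw [measure_iUnion hdisj (fun n => measurableSet_Icc)]
    have : ∀ n : ℕ, volume (Set.Icc (s n) (s n + δ)) = ENNReal.ofReal δ := by
      intro n; rw [Real.volume_Icc]; congr 1; ring
    simp only [this]
    exact ENNReal.tsum_const_eq_top_of_ne_zero (by simp [ENNReal.ofReal_eq_zero, not_le, hδ])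
  have hfin : volume A < ⊤ := hint.measure_ge_lt_top (by linarith)
  have : volume A = ⊤ := by
    rw [eq_top_iff, ← hmeas]
    exact measure_mono (Set.iUnion_subset hsub)
  exact absurd this (by simp [hfin.ne])

private lemma barbalat_atBot (f : ℝ → ℝ) (hf0 : ∀ x, 0 ≤ f x) (C : ℝ) (hC : 0 < C)
    (hlip : ∀ x y, |f x - f y| ≤ C * |x - y|)
    (hint : Integrable f) : Tendsto f atBot (𝓝 0) := by
  have hgint : Integrable (fun x => f (-x)) := hint.comp_neg
  have hg := barbalat_atTop (fun x => f (-x)) (fun x => hf0 _) C hC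
    (fun x y => by
      have := hlip (-x) (-y)
      calc |f (-x) - f (-y)| ≤ C * |-x - -y| := this
        _ = C * |x - y| := by rw [show -x - -y = -(x - y) by ring, abs_neg]) hgint
  have := hg.comp tendsto_neg_atBot_atTop
  simpa [Function.comp_def] using this

/-- On the torus of revolution (generating curve
`φ(u) = R + r·cos(u/r)`, `ψ(u) = r·sin(u/r)`, `0 < r < R`), every rotational
soliton (`a ≠ 0`) with finite total squared geodesic curvature is asymptotic to
the equators: `u'(s) → 0` as `s → ±∞`. -/
theorem torus_soliton_asymptotic_to_equators
    (r R : ℝ) (hr : 0 < r) (hrR : r < R)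
    (φ ψ : ℝ → ℝ)
    (hφdef : φ = fun x => R + r * cos (x / r))
    (hψdef : ψ = fun x => r * sin (x / r))
    (u v : ℝ → ℝ)
    (hu : ContDiff ℝ (⊤ : ℕ∞) u) (hv : ContDiff ℝ (⊤ : ℕ∞) v)
    (harc : ∀ s, deriv u s ^ 2 + φ (u s) ^ 2 * deriv v s ^ 2 = 1)
    (a : ℝ) (ha : a ≠ 0)
    (κ : ℝ → ℝ)
    (hκ : κ = fun s =>
      (deriv u s * deriv (deriv v) s - deriv (deriv u) s * deriv v s) * φ (u s)
        + deriv v s * (1 + deriv u s ^ 2) * deriv φ (u s))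
    (hsol : ∀ s, κ s = a * φ (u s) * deriv u s)
    (hint : Integrable (fun s => κ s ^ 2)) :
    Tendsto (deriv u) atTop (𝓝 0) ∧ Tendsto (deriv u) atBot (𝓝 0) := by
  have hr0 : r ≠ 0 := hr.ne'
  have hRr : 0 < R - r := by linarith
  -- φ is smooth with bounded values and derivative
  have hφc : ContDiff ℝ (⊤ : ℕ∞) φ := by
    rw [hφdef]
    exact contDiff_const.add (contDiff_const.mul (Real.contDiff_cos.comp
      (contDiff_id.div_const r)))
  have hφd : Differentiable ℝ φ := hφc.differentiable (by simp)
  have hφlb : ∀ x, R - r ≤ φ x := by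
    intro x; rw [hφdef]; simp only
    nlinarith [Real.neg_one_le_cos (x / r)]
  have hφub : ∀ x, φ x ≤ R + r := by
    intro x; rw [hφdef]; simp only
    nlinarith [Real.cos_le_one (x / r)]
  have hφpos : ∀ x, 0 < φ x := fun x => lt_of_lt_of_le hRr (hφlb x)
  have hφ'eq : ∀ x, deriv φ x = -Real.sin (x / r) := by
    intro x
    have h1 : HasDerivAt (fun y : ℝ => y / r) (1 / r) x := by
      simpa using (hasDerivAt_id x).div_const r
    have h2 : HasDerivAt (fun y : ℝ => Real.cos (y / r)) (-Real.sin (x / r) * (1 / r)) x :=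
      by exact (Real.hasDerivAt_cos (x / r)).comp x h1
    have h3 : HasDerivAt φ (r * (-Real.sin (x / r) * (1 / r))) x := by
      rw [hφdef]
      exact (h2.const_mul r).const_add R
    rw [h3.deriv]; field_simp
  have hφ'bd : ∀ x, |deriv φ x| ≤ 1 := by
    intro x; rw [hφ'eq x, abs_neg]; exact Real.abs_sin_le_one _
  -- differentiability of u, v and their derivatives
  obtain ⟨hud, hud'⟩ := contDiff_infty_iff_deriv.mp (hu.of_le (by simp))
  obtain ⟨hvd, hvd'⟩ := contDiff_infty_iff_deriv.mp (hv.of_le (by simp))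
  have hud'd : Differentiable ℝ (deriv u) := hud'.differentiable (by simp)
  have hvd'd : Differentiable ℝ (deriv v) := hvd'.differentiable (by simp)
  -- bounds from arc-length
  have hU2 : ∀ s, (deriv u s) ^ 2 ≤ 1 := by
    intro s; nlinarith [harc s, sq_nonneg (φ (u s) * deriv v s)]
  have hPV2 : ∀ s, (φ (u s) * deriv v s) ^ 2 ≤ 1 := by
    intro s; nlinarith [harc s, sq_nonneg (deriv u s)]
  have hUabs : ∀ s, |deriv u s| ≤ 1 := fun s => (sq_le_one_iff_abs_le_one _).mp (hU2 s)
  have hPVabs : ∀ s, |φ (u s) * deriv v s| ≤ 1 :=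
    fun s => (sq_le_one_iff_abs_le_one _).mp (hPV2 s)
  -- differentiated arc-length identity
  have hA : ∀ s, deriv u s * deriv (deriv u) s
      + φ (u s) * deriv φ (u s) * deriv u s * deriv v s ^ 2
      + φ (u s) ^ 2 * deriv v s * deriv (deriv v) s = 0 := by
    intro s
    have hu1 : HasDerivAt u (deriv u s) s := (hud s).hasDerivAt
    have hu2 : HasDerivAt (deriv u) (deriv (deriv u) s) s := (hud'd s).hasDerivAt
    have hv2 : HasDerivAt (deriv v) (deriv (deriv v) s) s := (hvd'd s).hasDerivAt
    have hφu : HasDerivAt (fun t => φ (u t)) (deriv φ (u s) * deriv u s) s :=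
      (hφd (u s)).hasDerivAt.comp s hu1
    have hE : HasDerivAt (fun t => deriv u t ^ 2 + φ (u t) ^ 2 * deriv v t ^ 2)
        ((2 * deriv u s ^ 1 * deriv (deriv u) s)
          + ((2 * φ (u s) ^ 1 * (deriv φ (u s) * deriv u s)) * deriv v s ^ 2
            + φ (u s) ^ 2 * (2 * deriv v s ^ 1 * deriv (deriv v) s))) s :=
      (hu2.pow 2).add ((hφu.pow 2).mul (hv2.pow 2))
    have hconst : (fun t => deriv u t ^ 2 + φ (u t) ^ 2 * deriv v t ^ 2)
        = fun _ => (1 : ℝ) := funext harc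
    rw [hconst] at hE
    have h0 := hE.unique (hasDerivAt_const s 1)
    nlinarith [h0]
  -- second derivative formula
  have h2nd : ∀ s, deriv (deriv u) s
      = φ (u s) * deriv φ (u s) * deriv v s ^ 2 - κ s * deriv v s * φ (u s) := by
    intro s
    have hκs : κ s = (deriv u s * deriv (deriv v) s - deriv (deriv u) s * deriv v s) * φ (u s)
        + deriv v s * (1 + deriv u s ^ 2) * deriv φ (u s) := by rw [hκ]
    have hAs := hA s
    have hCs := harc s
    linear_combination (deriv v s * φ (u s)) * hκs + deriv u s * hAs
      - deriv (deriv u) s * hCs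
  -- bound on second derivative
  set M : ℝ := 1 / (R - r) + |a| * (R + r) with hM
  have hMpos : 0 < M := by
    have h1 : 0 < 1 / (R - r) := div_pos one_pos hRr
    have h2 : 0 ≤ |a| * (R + r) := mul_nonneg (abs_nonneg a) (by linarith)
    rw [hM]; linarith
  have h2bd : ∀ s, |deriv (deriv u) s| ≤ M := by
    intro s
    set P := φ (u s)
    set P' := deriv φ (u s)
    set U := deriv u s
    set V := deriv v s
    have hPpos : 0 < P := hφpos (u s)
    have hform : deriv (deriv u) s = P * P' * V ^ 2 - a * P ^ 2 * U * V := by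
      rw [h2nd s, hsol s]; ring
    have h1 : |P * P' * V ^ 2| ≤ 1 / (R - r) := by
      have e : |P * P' * V ^ 2| = P * |P'| * V ^ 2 := by
        rw [abs_mul, abs_mul, abs_of_nonneg hPpos.le, abs_pow, sq_abs]
      rw [e, le_div_iff₀ hRr]
      have ta : 0 ≤ P * V ^ 2 * (P - (R - r)) :=
        mul_nonneg (mul_nonneg hPpos.le (sq_nonneg V)) (by linarith [hφlb (u s)])
      have tb : 0 ≤ (1 - |P'|) * (P * V ^ 2 * (R - r)) :=
        mul_nonneg (by linarith [hφ'bd (u s)])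
          (mul_nonneg (mul_nonneg hPpos.le (sq_nonneg V)) hRr.le)
      have tc : P ^ 2 * V ^ 2 ≤ 1 := by nlinarith [hPV2 s]
      nlinarith [ta, tb, tc]
    have h2 : |a * P ^ 2 * U * V| ≤ |a| * (R + r) := by
      have e : |a * P ^ 2 * U * V| = |a| * P * |U| * (P * |V|) := by
        rw [abs_mul, abs_mul, abs_mul, abs_pow, sq_abs]
        ring
      have hPV : P * |V| ≤ 1 := by
        have := hPVabs s
        rwa [abs_mul, abs_of_nonneg hPpos.le] at this
      rw [e]
      have t1 : 0 ≤ |a| * P * |U| * (1 - P * |V|) :=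
        mul_nonneg (mul_nonneg (mul_nonneg (abs_nonneg a) hPpos.le) (abs_nonneg U))
          (by linarith)
      have t2 : 0 ≤ |a| * P * (1 - |U|) :=
        mul_nonneg (mul_nonneg (abs_nonneg a) hPpos.le) (by linarith [hUabs s])
      have t3 : 0 ≤ |a| * (R + r - P) :=
        mul_nonneg (abs_nonneg a) (by linarith [hφub (u s)])
      nlinarith [t1, t2, t3]
    calc |deriv (deriv u) s| ≤ |P * P' * V ^ 2| + |a * P ^ 2 * U * V| := by
          rw [hform]; exact abs_sub _ _
      _ ≤ 1 / (R - r) + |a| * (R + r) := add_le_add h1 h2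
      _ = M := hM.symm
  -- f = (u')² is Lipschitz
  set f : ℝ → ℝ := fun s => deriv u s ^ 2 with hf
  have hfd : Differentiable ℝ f := fun s => ((hud'd s).hasDerivAt.pow 2).differentiableAt
  have hflip : ∀ x y, |f x - f y| ≤ (2 * M) * |x - y| := by
    have hlw : LipschitzWith (Real.toNNReal (2 * M)) f := by
      apply lipschitzWith_of_nnnorm_deriv_le hfd
      intro x
      have hder : deriv f x = 2 * deriv u x ^ 1 * deriv (deriv u) x :=
        ((hud'd x).hasDerivAt.pow 2).deriv
      rw [← NNReal.coe_le_coe, coe_nnnorm, Real.coe_toNNReal _ (by positivity)]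
      rw [hder, Real.norm_eq_abs]
      have : |2 * deriv u x ^ 1 * deriv (deriv u) x|
          = 2 * |deriv u x| * |deriv (deriv u) x| := by
        rw [abs_mul, abs_mul]; norm_num
      rw [this]
      nlinarith [hUabs x, h2bd x, abs_nonneg (deriv u x), abs_nonneg (deriv (deriv u) x)]
    intro x y
    have := hlw.dist_le_mul x y
    rwa [Real.dist_eq, Real.dist_eq, Real.coe_toNNReal _ (by positivity)] at this
  -- f is integrable
  have hfint : Integrable f := by
    have hcont : Continuous f := (hud'.continuous).pow 2
    apply Integrable.mono' (hint.const_mul (1 / (a ^ 2 * (R - r) ^ 2)))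
      hcont.aestronglyMeasurable
    refine Filter.Eventually.of_forall (fun s => ?_)
    rw [Real.norm_eq_abs, abs_of_nonneg (sq_nonneg _)]
    have hκ2 : κ s ^ 2 = a ^ 2 * φ (u s) ^ 2 * deriv u s ^ 2 := by rw [hsol s]; ring
    have ha2 : 0 < a ^ 2 := by positivity
    have hden : 0 < a ^ 2 * (R - r) ^ 2 := by positivity
    have hφ2 : (R - r) ^ 2 ≤ φ (u s) ^ 2 := by nlinarith [hφlb (u s), hRr]
    have hstep : a ^ 2 * (R - r) ^ 2 * f s ≤ a ^ 2 * φ (u s) ^ 2 * deriv u s ^ 2 := by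
      have := mul_nonneg (mul_nonneg (sq_nonneg a) (sq_nonneg (deriv u s)))
        (sub_nonneg.mpr hφ2)
      simp only [hf]
      nlinarith [this]
    rw [hκ2]
    calc f s = (a ^ 2 * (R - r) ^ 2 * f s) * (1 / (a ^ 2 * (R - r) ^ 2)) := by
          field_simp
      _ ≤ (a ^ 2 * φ (u s) ^ 2 * deriv u s ^ 2) * (1 / (a ^ 2 * (R - r) ^ 2)) :=
          mul_le_mul_of_nonneg_right hstep (by positivity)
      _ = 1 / (a ^ 2 * (R - r) ^ 2) * (a ^ 2 * φ (u s) ^ 2 * deriv u s ^ 2) := by ring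
  have hf0 : ∀ x, 0 ≤ f x := fun x => sq_nonneg _
  have htop := barbalat_atTop f hf0 (2 * M) (by positivity) hflip hfint
  have hbot := barbalat_atBot f hf0 (2 * M) (by positivity) hflip hfint
  -- conclude
  have habs : ∀ s, |deriv u s| = Real.sqrt (f s) := by
    intro s; rw [hf]; exact (Real.sqrt_sq_eq_abs _).symm
  constructor
  · rw [tendsto_zero_iff_abs_tendsto_zero]
    have : Tendsto (fun s => Real.sqrt (f s)) atTop (𝓝 0) := by
      have := (Real.continuous_sqrt.tendsto 0).comp htop
      simpa [Function.comp_def] using this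
    exact this.congr (fun s => (habs s).symm)
  · rw [tendsto_zero_iff_abs_tendsto_zero]
    have : Tendsto (fun s => Real.sqrt (f s)) atBot (𝓝 0) := by
      have := (Real.continuous_sqrt.tendsto 0).comp hbot
      simpa [Function.comp_def] using this
    exact this.congr (fun s => (habs s).symm)
end

section
/- Fix 0 < r < R and let φ(u) = R + r·cos(u/r) and ψ(u) = r·sin(u/r). There do not exist smooth u, v : ℝ → ℝ with u'(s)² + φ(u(s))²·v'(s)² = 1 for all s, constants a ∈ ℝ and k ∈ ℝ with k ≠ 0, such that the geodesic curvature κ(s) = (u'(s)v''(s) − u''(s)v'(s))·φ(u(s)) + v'(s)(1 + u'(s)²)·φ'(u(s)) satisfies both κ(s) = a·φ(u(s))·u'(s) and κ(s) = k for all s. In other words, there is no rotational soliton of the curve shortening flow on the torus with non-null constant geodesic curvature. -/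
open Real

/-- There is no rotational soliton of the curve shortening flow on
the torus of revolution with non-null constant geodesic curvature. -/
theorem no_torus_soliton_with_constant_curvature
    (r R : ℝ) (hr : 0 < r) (hrR : r < R)
    (φ ψ : ℝ → ℝ)
    (hφdef : φ = fun x => R + r * cos (x / r))
    (hψdef : ψ = fun x => r * sin (x / r))
    (u v : ℝ → ℝ)
    (hu : ContDiff ℝ (⊤ : ℕ∞) u) (hv : ContDiff ℝ (⊤ : ℕ∞) v)
    (harc : ∀ s, deriv u s ^ 2 + φ (u s) ^ 2 * deriv v s ^ 2 = 1)
    (a k : ℝ) (hk : k ≠ 0)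
    (κ : ℝ → ℝ)
    (hκ : κ = fun s =>
      (deriv u s * deriv (deriv v) s - deriv (deriv u) s * deriv v s) * φ (u s)
        + deriv v s * (1 + deriv u s ^ 2) * deriv φ (u s))
    (hsol : ∀ s, κ s = a * φ (u s) * deriv u s)
    (hconst : ∀ s, κ s = k) :
    False := by
  have hrne : r ≠ 0 := ne_of_gt hr
  -- positivity of φ
  have hφpos : ∀ x, 0 < φ x := by
    intro x
    rw [hφdef]
    have h1 := Real.neg_one_le_cos (x / r)
    nlinarith
  -- derivative of φ
  have hφ' : ∀ x : ℝ, HasDerivAt φ (-Real.sin (x / r)) x := by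
    intro x
    have h1 : HasDerivAt (fun y : ℝ => y / r) (1 / r) x := (hasDerivAt_id x).div_const r
    have h2 : HasDerivAt (fun y : ℝ => Real.cos (y / r)) (-Real.sin (x / r) * (1 / r)) x :=
      h1.cos
    have h3 := (h2.const_mul r).const_add R
    rw [hφdef]
    exact h3.congr_deriv (by field_simp)
  have hφderiv : ∀ x : ℝ, deriv φ x = -Real.sin (x / r) := fun x => (hφ' x).deriv
  -- differentiability
  have hu' : ContDiff ℝ ((⊤ : ℕ∞) : WithTop ℕ∞) u := hu.of_le (by simp)
  have hv' : ContDiff ℝ ((⊤ : ℕ∞) : WithTop ℕ∞) v := hv.of_le (by simp)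
  have hdu : Differentiable ℝ u := hu.differentiable (by simp)
  have hdu1 : Differentiable ℝ (deriv u) :=
    ((contDiff_infty_iff_deriv.mp hu').2).differentiable (by simp)
  have hdv : Differentiable ℝ v := hv.differentiable (by simp)
  have hdv1 : Differentiable ℝ (deriv v) :=
    ((contDiff_infty_iff_deriv.mp hv').2).differentiable (by simp)
  -- a ≠ 0
  have hkey : ∀ s, a * φ (u s) * deriv u s = k := fun s => (hsol s).symm.trans (hconst s)
  have ha : a ≠ 0 := by
    intro h
    apply hk
    rw [← hkey 0, h]; ring
  set c : ℝ := k / a with hc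
  have hcne : c ≠ 0 := div_ne_zero hk ha
  have keyc : ∀ s, φ (u s) * deriv u s = c := by
    intro s
    rw [hc]
    field_simp
    linear_combination hkey s
  -- f = φ ∘ u and its derivative
  have hF : ∀ s, HasDerivAt (fun t => φ (u t)) (-Real.sin (u s / r) * deriv u s) s :=
    fun s => (hφ' (u s)).comp s (hdu s).hasDerivAt
  -- E3 : arc length
  have hE3 : ∀ s, deriv u s ^ 2 + φ (u s) ^ 2 * deriv v s ^ 2 = 1 := harc
  -- E1 : curvature equation
  have hE1 : ∀ s, (deriv u s * deriv (deriv v) s - deriv (deriv u) s * deriv v s) * φ (u s)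
      + deriv v s * (1 + deriv u s ^ 2) * (-Real.sin (u s / r)) = k := by
    intro s
    have := hconst s
    rw [hκ] at this
    rw [← hφderiv (u s)]
    exact this
  -- E2 : derivative of arc length identity
  have hE2 : ∀ s, deriv u s * deriv (deriv u) s
      + φ (u s) * (-Real.sin (u s / r)) * deriv u s * deriv v s ^ 2
      + φ (u s) ^ 2 * (deriv v s * deriv (deriv v) s) = 0 := by
    intro s
    have hG : HasDerivAt (fun t => deriv u t ^ 2 + φ (u t) ^ 2 * deriv v t ^ 2)
        (2 * deriv u s * deriv (deriv u) s
          + 2 * φ (u s) * (-Real.sin (u s / r)) * deriv u s * deriv v s ^ 2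
          + φ (u s) ^ 2 * (2 * deriv v s * deriv (deriv v) s)) s := by
      have h1 : HasDerivAt (fun t => deriv u t ^ 2)
          (2 * deriv u s * deriv (deriv u) s) s := by
        have := ((hdu1 s).hasDerivAt).pow 2
        exact this.congr_deriv (by push_cast; ring)
      have h2 : HasDerivAt (fun t => φ (u t) ^ 2)
          (2 * φ (u s) * (-Real.sin (u s / r) * deriv u s)) s := by
        have := (hF s).pow 2
        exact this.congr_deriv (by push_cast; ring)
      have h3 : HasDerivAt (fun t => deriv v t ^ 2)
          (2 * deriv v s * deriv (deriv v) s) s := by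
        have := ((hdv1 s).hasDerivAt).pow 2
        exact this.congr_deriv (by push_cast; ring)
      have h4 := h1.add (h2.mul h3)
      exact h4.congr_deriv (by ring)
    have hGc : HasDerivAt (fun _ : ℝ => (1:ℝ)) (2 * deriv u s * deriv (deriv u) s
          + 2 * φ (u s) * (-Real.sin (u s / r)) * deriv u s * deriv v s ^ 2
          + φ (u s) ^ 2 * (2 * deriv v s * deriv (deriv v) s)) s := by
      have heq : (fun t => deriv u t ^ 2 + φ (u t) ^ 2 * deriv v t ^ 2)
          = fun _ : ℝ => (1:ℝ) := funext harc
      rwa [heq] at hG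
    have := (hasDerivAt_const s (1:ℝ)).unique hGc
    linarith [this]
  -- D2 : derivative of φ(u) * u' = c
  have hD2 : ∀ s, -Real.sin (u s / r) * deriv u s * deriv u s
      + φ (u s) * deriv (deriv u) s = 0 := by
    intro s
    have hG : HasDerivAt (fun t => φ (u t) * deriv u t)
        (-Real.sin (u s / r) * deriv u s * deriv u s + φ (u s) * deriv (deriv u) s) s :=
      (hF s).mul (hdu1 s).hasDerivAt
    have heq : (fun t => φ (u t) * deriv u t) = fun _ : ℝ => c := funext keyc
    rw [heq] at hG
    have := (hasDerivAt_const s c).unique hG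
    linarith [this]
  -- Step 2 : u'' - φ φ' v'² = -k φ v'
  have hstep2 : ∀ s, deriv (deriv u) s
      - φ (u s) * (-Real.sin (u s / r)) * deriv v s ^ 2
      = -k * φ (u s) * deriv v s := by
    intro s
    linear_combination (-(φ (u s) * deriv v s)) * hE1 s + deriv u s * hE2 s
      - deriv (deriv u) s * hE3 s
  -- Step 4 : φ'(u) = k φ(u)² v'
  have hstep4 : ∀ s, -Real.sin (u s / r) = k * φ (u s) ^ 2 * deriv v s := by
    intro s
    have hfne : φ (u s) ≠ 0 := ne_of_gt (hφpos (u s))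
    have h2 := hstep2 s
    have h3 := hD2 s
    have h4 := hE3 s
    linear_combination (-(φ (u s))) * h2 + h3 + Real.sin (u s / r) * h4
  -- Step 5 : polynomial relation
  have hpoly : ∀ s, r ^ 2 * k ^ 2 * (φ (u s) ^ 2 - c ^ 2) = r ^ 2 - (φ (u s) - R) ^ 2 := by
    intro s
    have hsin : Real.sin (u s / r) ^ 2 = 1 - Real.cos (u s / r) ^ 2 := by
      nlinarith [Real.sin_sq_add_cos_sq (u s / r)]
    have hcos : r * Real.cos (u s / r) = φ (u s) - R := by
      rw [hφdef]; ring
    have h4 := hstep4 s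
    have h3 := hE3 s
    have hkc := keyc s
    -- (-sin)² = k² f⁴ v'² = k² f² (1 - u'²) = k² f² - k² c²
    have h6 : Real.sin (u s / r) ^ 2 = k ^ 2 * (φ (u s) ^ 2 - c ^ 2) := by
      linear_combination (-Real.sin (u s / r) + k * φ (u s) ^ 2 * deriv v s) * h4
        + k ^ 2 * φ (u s) ^ 2 * h3 - k ^ 2 * (φ (u s) * deriv u s + c) * hkc
    have h7 : r ^ 2 * Real.cos (u s / r) ^ 2 = (φ (u s) - R) ^ 2 := by
      linear_combination (r * Real.cos (u s / r) + (φ (u s) - R)) * hcos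
    linear_combination (-(r ^ 2)) * h6 + r ^ 2 * hsin - h7
  -- Step 6 : f is constant
  have hfcont : Continuous fun s => φ (u s) := by
    have hφc : Continuous φ := by
      rw [hφdef]
      exact continuous_const.add (continuous_const.mul
        (Real.continuous_cos.comp (continuous_id.div_const r)))
    exact hφc.comp hdu.continuous
  set w : ℝ := 2 * R / (r ^ 2 * k ^ 2 + 1) - φ (u 0) with hw
  have halt : ∀ s, φ (u s) = φ (u 0) ∨ φ (u s) = w := by
    intro s
    have h1 := hpoly s
    have h2 := hpoly 0
    have hfac : (φ (u s) - φ (u 0)) *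
        ((r ^ 2 * k ^ 2 + 1) * (φ (u s) + φ (u 0)) - 2 * R) = 0 := by
      linear_combination h1 - h2
    rcases mul_eq_zero.mp hfac with h | h
    · left; linarith
    · right
      have hden : r ^ 2 * k ^ 2 + 1 ≠ 0 := by positivity
      rw [hw]
      field_simp
      linarith
  have hfconst : ∀ s, φ (u s) = φ (u 0) := by
    intro s
    by_contra hne
    have hpair : ({φ (u 0), w} : Set ℝ).Finite := (Set.finite_singleton w).insert _
    rcases lt_or_gt_of_ne hne with hlt | hlt
    · have hsub : Set.Icc (φ (u s)) (φ (u 0)) ⊆ ({φ (u 0), w} : Set ℝ) := by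
        intro t ht
        obtain ⟨s', hs'⟩ := intermediate_value_univ s 0 hfcont ht
        rcases halt s' with h | h
        · left; rw [← hs']; exact h
        · right; rw [← hs']; exact h
      exact Set.Icc_infinite hlt (hpair.subset hsub)
    · have hsub : Set.Icc (φ (u 0)) (φ (u s)) ⊆ ({φ (u 0), w} : Set ℝ) := by
        intro t ht
        obtain ⟨s', hs'⟩ := intermediate_value_univ 0 s hfcont ht
        rcases halt s' with h | h
        · left; rw [← hs']; exact h
        · right; rw [← hs']; exact h
      exact Set.Icc_infinite hlt (hpair.subset hsub)
  -- Step 7 : conclude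
  -- f constant ⇒ derivative of f is zero ⇒ sin(u/r) * u' = 0, but u' ≠ 0
  have hu1ne : ∀ s, deriv u s ≠ 0 := by
    intro s h0
    have := keyc s
    rw [h0, mul_zero] at this
    exact hcne this.symm
  have hsin0 : ∀ s, Real.sin (u s / r) = 0 := by
    intro s
    have hG : HasDerivAt (fun t => φ (u t)) (-Real.sin (u s / r) * deriv u s) s := hF s
    have heq : (fun t => φ (u t)) = fun _ : ℝ => φ (u 0) := funext hfconst
    rw [heq] at hG
    have h0 := (hasDerivAt_const s (φ (u 0))).unique hG
    have : -Real.sin (u s / r) * deriv u s = 0 := h0.symm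
    rcases mul_eq_zero.mp this with h | h
    · linarith
    · exact absurd h (hu1ne s)
  have hv1 : ∀ s, deriv v s = 0 := by
    intro s
    have h4 := hstep4 s
    rw [hsin0 s, neg_zero] at h4
    have hfne : φ (u s) ≠ 0 := ne_of_gt (hφpos (u s))
    have h5 : k * φ (u s) ^ 2 * deriv v s = 0 := by linarith [h4]
    rcases mul_eq_zero.mp h5 with h | h
    · exact absurd h (mul_ne_zero hk (pow_ne_zero 2 hfne))
    · exact h
  have hu2 : ∀ s, deriv (deriv u) s = 0 := by
    intro s
    have h := hD2 s
    rw [hsin0 s, neg_zero] at h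
    have hfne : φ (u s) ≠ 0 := ne_of_gt (hφpos (u s))
    have h5 : φ (u s) * deriv (deriv u) s = 0 := by linarith [h]
    rcases mul_eq_zero.mp h5 with h' | h'
    · exact absurd h' hfne
    · exact h'
  have hv2 : ∀ s, deriv (deriv v) s = 0 := by
    intro s
    have heq : deriv v = fun _ : ℝ => (0:ℝ) := funext hv1
    rw [heq]
    exact deriv_const s 0
  have hfinal := hconst 0
  rw [hκ] at hfinal
  simp only [hv1 0, hu2 0, hv2 0] at hfinal
  apply hk
  rw [← hfinal]
  ring
end

section
/- Fix 0 < r < R and let φ(u) = R + r·cos(u/r) and ψ(u) = r·sin(u/r). Let u, v : ℝ → ℝ be smooth with u'(s)² + φ(u(s))²·v'(s)² = 1 for all s, and let a ∈ ℝ. Then the geodesic curvature κ(s) = (u'(s)v''(s) − u''(s)v'(s))·φ(u(s)) + v'(s)(1 + u'(s)²)·φ'(u(s)) satisfies κ(s) = a·φ(u(s))·u'(s) for all s if and only if for all s: u''(s) = −a·u'(s)·v'(s)·φ(u(s))² − v'(s)²·φ(u(s))·sin(u(s)/r) and v''(s) = a·u'(s)² + 2·u'(s)·v'(s)·sin(u(s)/r)/φ(u(s)).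 -/
open Real

/-- On the torus of revolution, a curve is a rotational soliton
(κ = a·φ(u)·u') if and only if it satisfies the ODE system
`u'' = −a·u'·v'·φ(u)² − v'²·φ(u)·sin(u/r)` and
`v'' = a·u'² + 2·u'·v'·sin(u/r)/φ(u)`. -/
theorem torus_soliton_iff_ode_system
    (r R : ℝ) (hr : 0 < r) (hrR : r < R)
    (φ ψ : ℝ → ℝ)
    (hφdef : φ = fun x => R + r * cos (x / r))
    (hψdef : ψ = fun x => r * sin (x / r))
    (u v : ℝ → ℝ)
    (hu : ContDiff ℝ (⊤ : ℕ∞) u) (hv : ContDiff ℝ (⊤ : ℕ∞) v)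
    (harc : ∀ s, deriv u s ^ 2 + φ (u s) ^ 2 * deriv v s ^ 2 = 1)
    (a : ℝ)
    (κ : ℝ → ℝ)
    (hκ : κ = fun s =>
      (deriv u s * deriv (deriv v) s - deriv (deriv u) s * deriv v s) * φ (u s)
        + deriv v s * (1 + deriv u s ^ 2) * deriv φ (u s)) :
    (∀ s, κ s = a * φ (u s) * deriv u s)
      ↔ (∀ s : ℝ,
          deriv (deriv u) s
            = -a * deriv u s * deriv v s * φ (u s) ^ 2
              - deriv v s ^ 2 * φ (u s) * sin (u s / r)
          ∧ deriv (deriv v) s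
            = a * deriv u s ^ 2
              + 2 * deriv u s * deriv v s * sin (u s / r) / φ (u s)) := by
  have hrne : r ≠ 0 := ne_of_gt hr
  have hφpos : ∀ x, 0 < φ x := by
    intro x
    rw [hφdef]
    nlinarith [Real.neg_one_le_cos (x / r), Real.cos_le_one (x / r)]
  have hφdiff : ∀ x : ℝ, HasDerivAt φ (-sin (x / r)) x := by
    intro x
    have h1 : HasDerivAt (fun y : ℝ => y / r) (1 / r) x := by
      simpa using (hasDerivAt_id x).div_const r
    have h2 : HasDerivAt (fun y : ℝ => cos (y / r)) (-sin (x / r) * (1 / r)) x :=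
      h1.cos
    have h3 : HasDerivAt (fun y : ℝ => R + r * cos (y / r))
        (R * 0 + r * (-sin (x / r) * (1 / r))) x := by
      simpa using (h2.const_mul r).const_add R
    rw [hφdef]
    convert h3 using 1
    field_simp
    ring
  have hφ' : ∀ x, deriv φ x = -sin (x / r) := fun x => (hφdiff x).deriv
  have hu1 : Differentiable ℝ (deriv u) :=
    (contDiff_infty_iff_deriv.mp (hu.of_le (by simp))).2.differentiable (by simp)
  have hv1 : Differentiable ℝ (deriv v) :=
    (contDiff_infty_iff_deriv.mp (hv.of_le (by simp))).2.differentiable (by simp)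
  -- derivative of the arc-length identity
  have hkey : ∀ s : ℝ,
      2 * deriv u s * deriv (deriv u) s
        + 2 * φ (u s) * (-sin (u s / r) * deriv u s) * deriv v s ^ 2
        + φ (u s) ^ 2 * (2 * deriv v s * deriv (deriv v) s) = 0 := by
    intro s
    have hu' : HasDerivAt u (deriv u s) s :=
      (hu.differentiable (by simp) s).hasDerivAt
    have hA : HasDerivAt (deriv u) (deriv (deriv u) s) s :=
      (hu1 s).hasDerivAt
    have hB : HasDerivAt (deriv v) (deriv (deriv v) s) s :=
      (hv1 s).hasDerivAt
    have hφu : HasDerivAt (fun t => φ (u t)) (-sin (u s / r) * deriv u s) s :=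
      (hφdiff (u s)).comp s hu'
    have hF : HasDerivAt (fun t => deriv u t ^ 2 + φ (u t) ^ 2 * deriv v t ^ 2)
        (2 * deriv u s ^ 1 * deriv (deriv u) s
          + ((2 * φ (u s) ^ 1 * (-sin (u s / r) * deriv u s)) * deriv v s ^ 2
            + φ (u s) ^ 2 * (2 * deriv v s ^ 1 * deriv (deriv v) s))) s :=
      (hA.pow 2).add (((hφu.pow 2).mul (hB.pow 2)))
    have hFc : (fun t => deriv u t ^ 2 + φ (u t) ^ 2 * deriv v t ^ 2)
        = fun _ : ℝ => (1 : ℝ) := funext harc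
    rw [hFc] at hF
    have h0 := (hasDerivAt_const s (1 : ℝ)).unique hF
    ring_nf
    ring_nf at h0
    linarith
  subst hκ
  constructor
  · intro hsol s
    have E1 := hsol s
    simp only [hφ'] at E1
    have E2 := hkey s
    have H := harc s
    have hfne : φ (u s) ≠ 0 := (hφpos (u s)).ne'
    constructor
    · linear_combination (deriv u s / 2) * E2 - φ (u s) * deriv v s * E1
        - deriv (deriv u) s * H
    · have key : deriv (deriv v) s * φ (u s)
          = a * deriv u s ^ 2 * φ (u s) + 2 * deriv u s * deriv v s * sin (u s / r) := by
        linear_combination deriv u s * E1 + (φ (u s) * deriv v s / 2) * E2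
          + (deriv u s * deriv v s * sin (u s / r) - φ (u s) * deriv (deriv v) s) * H
      field_simp
      linear_combination key
  · intro hode s
    obtain ⟨h1, h2⟩ := hode s
    have hfne : φ (u s) ≠ 0 := (hφpos (u s)).ne'
    have h2' : φ (u s) * deriv (deriv v) s
        = a * deriv u s ^ 2 * φ (u s) + 2 * deriv u s * deriv v s * sin (u s / r) := by
      rw [h2]; field_simp
    have H := harc s
    simp only [hφ']
    linear_combination deriv u s * h2' - deriv v s * φ (u s) * h1
      + (deriv v s * sin (u s / r) + a * φ (u s) * deriv u s) * H
end
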